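/- arXiv:2307.01170 — 7 statements merged into one kernel-verified Lean document; each statement's English description precedes it below -/
import Mathlib

section
/- Let c : X → Y be a concept and let x ∈ X have positive margin m_c(x) > 0. Then the open ball B(x, m_c(x)/3) is a mutually-labeling set for c, i.e. ρ(x₁, x₂) < m_c(x₁) for all x₁, x₂ ∈ B(x, m_c(x)/3). -/
open scoped ENNReal

/-- The margin of a point `x`: the infimum distance (in `[0,∞]`) to points of a
different class under the concept `c`; `∞` if no such point exists. -/
noncomputable def margin {X Y : Type*} [MetricSpace X] (c : X → Y) (x : X) : ℝ≥0∞ :=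
  ⨅ (x' : X) (_ : c x' ≠ c x), edist x x'

/-- A set `U` is mutually labeling for `c` if `ρ(x,x') < m_c(x)` for all `x, x' ∈ U`. -/
def MutuallyLabeling {X Y : Type*} [MetricSpace X] (c : X → Y) (U : Set X) : Prop :=
  ∀ x ∈ U, ∀ x' ∈ U, edist x x' < margin c x

/-! The margin is `1`-Lipschitz, so on the ball of radius `m/3` around `x` it stays above
`2m/3`, while any two points of that ball are less than `2m/3` apart. In `[0, ∞]` this is
argued by adding `ρ(x₁, x)` to both sides rather than subtracting it from `m`, which would
fail for `m = ∞`. -/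

section Margin

variable {X Y : Type*} [MetricSpace X]

theorem margin_eq_infEDist (c : X → Y) (x : X) :
    margin c x = Metric.infEDist x {x' | c x' ≠ c x} :=
  rfl

theorem margin_le_margin_add_edist (c : X → Y) (x y : X) :
    margin c x ≤ margin c y + edist x y := by
  by_cases hxy : c y = c x
  · simpa only [margin_eq_infEDist, hxy] using Metric.infEDist_le_infEDist_add_edist
  · exact (Metric.infEDist_le_edist_of_mem hxy).trans le_add_self

end Margin

theorem ball_mutuallyLabeling_general {X Y : Type*} [MetricSpace X] (c : X → Y) (x : X) :
    MutuallyLabeling c (EMetric.ball x (margin c x / 3)) := by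
  intro x₁ (h₁ : edist x₁ x < margin c x / 3) x₂ (h₂ : edist x₂ x < margin c x / 3)
  refine lt_of_add_lt_add_right (a := edist x₁ x) ?_
  calc edist x₁ x₂ + edist x₁ x ≤ edist x₁ x + edist x₂ x + edist x₁ x := by
        gcongr; exact edist_triangle_right _ _ _
    _ < margin c x / 3 + margin c x / 3 + margin c x / 3 :=
        ENNReal.add_lt_add (ENNReal.add_lt_add h₁ h₂) h₁
    _ = margin c x := ENNReal.add_thirds _
    _ ≤ margin c x₁ + edist x₁ x := by
        rw [edist_comm]; exact margin_le_margin_add_edist c x x₁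

/-- If `x` has positive margin, the open ball `B(x, m_c(x)/3)` is a mutually-labeling
set, i.e. `ρ(x₁,x₂) < m_c(x₁)` for all `x₁, x₂` in the ball. -/
theorem ball_mutuallyLabeling {X Y : Type*} [MetricSpace X] (c : X → Y) (x : X)
    (hx : 0 < margin c x) :
    MutuallyLabeling c (EMetric.ball x (margin c x / 3)) :=
  ball_mutuallyLabeling_general c x
end

section
/- Let U ⊆ X be a mutually-labeling set for a concept c, let (x_s)_{s≥1} be any sequence in X, and suppose x_t ∈ U for some time t. Then for every τ ≥ t and every x ∈ U, every index s ∈ {1, …, τ} satisfying ρ(x, x_s) ≤ ρ(x, x_{s'}) for all s' ∈ {1, …, τ} must satisfy c(x_s) = c(x). In particular, after time t the 1-nearest neighbor rule (with arbitrary tie-breaking) predicts correctly on every point of U. -/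
open scoped ENNReal

section Margin

variable {X Y : Type*} [MetricSpace X] {c : X → Y}

theorem margin_le_edist_of_ne {x x' : X} (h : c x' ≠ c x) : margin c x ≤ edist x x' :=
  iInf₂_le x' h

theorem eq_of_edist_lt_margin {x x' : X} (h : edist x x' < margin c x) : c x' = c x := by
  by_contra hne
  exact (margin_le_edist_of_ne hne).not_gt h

theorem MutuallyLabeling.eq_of_edist_le {U : Set X} (hU : MutuallyLabeling c U) {p q y : X}
    (hp : p ∈ U) (hq : q ∈ U) (hy : edist p y ≤ edist p q) : c y = c p :=
  eq_of_edist_lt_margin (hy.trans_lt (hU p hp q hq))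

end Margin

/-- Once some instance `x t` of the sequence `(x s)_{s ≥ 1}` lands in a
mutually-labeling set `U`, then for every later time `τ ≥ t` and every point `x ∈ U`,
any nearest neighbor `x s` (`1 ≤ s ≤ τ`) of `x` among `x 1, …, x τ` has the correct
label `c (x s) = c x`; in particular the 1-nearest neighbor rule (with arbitrary
tie-breaking) predicts correctly on all of `U` after time `t`. -/
theorem mutuallyLabeling_locally_learned {X Y : Type*} [MetricSpace X] (c : X → Y)
    (U : Set X) (hU : MutuallyLabeling c U) (x : ℕ → X) (t : ℕ) (ht : 1 ≤ t)
    (hxt : x t ∈ U) :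
    ∀ τ, t ≤ τ → ∀ p ∈ U, ∀ s, 1 ≤ s → s ≤ τ →
      (∀ s', 1 ≤ s' → s' ≤ τ → edist p (x s) ≤ edist p (x s')) →
      c (x s) = c p := by
  intro τ htτ p hp s _ _ hnear
  exact hU.eq_of_edist_le hp hxt (hnear t ht htτ)
end

section
/- Let (X, ρ) be a totally bounded metric space and let c : X → Y be a concept with positive separation between classes: m := inf { ρ(x, x') : c(x) ≠ c(x') } > 0. Then there is a finite number N (one may take N to be the minimal number of open balls of radius m/3 needed to cover X) such that for every sequence (x_t)_{t≥1} in X, the 1-nearest neighbor rule makes at most N mistakes in total, even under worst-case tie-breaking; in particular it achieves sublinear regret on c. -/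
open scoped ENNReal

/-- The 1-nearest neighbor rule makes a mistake at time `t ≥ 2` on the sequence
`(x s)_{s ≥ 1}` labeled by `c`, under worst-case tie-breaking, if some nearest
neighbor `x s` (`1 ≤ s < t`) of `x t` has the wrong label. -/
def NNMistake {X Y : Type*} [MetricSpace X] (c : X → Y) (x : ℕ → X) (t : ℕ) : Prop :=
  ∃ s, 1 ≤ s ∧ s < t ∧ (∀ s', 1 ≤ s' → s' < t → edist (x t) (x s) ≤ edist (x t) (x s'))
    ∧ c (x s) ≠ c (x t)

open Metric

theorem Set.Pairwise.encard_le_card_of_cover {ι X : Type*} [PseudoEMetricSpace X]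
    {r m : ℝ≥0∞} (hrm : r + r ≤ m) {S : Finset X}
    (hS : (Set.univ : Set X) ⊆ ⋃ y ∈ S, eball y r) {T : Set ι} {f : ι → X}
    (hT : T.Pairwise fun i j => m ≤ edist (f i) (f j)) : T.encard ≤ S.card := by
  have hcover : ∀ a, ∃ y ∈ S, edist a y < r := by
    simpa [Set.subset_def] using hS
  choose g hgS hg using hcover
  have hinj : Set.InjOn (g ∘ f) T := by
    intro i hi j hj (hij : g (f i) = g (f j))
    by_contra hne
    have hclose : edist (f i) (f j) < m :=
      calc edist (f i) (f j) ≤ edist (f i) (g (f i)) + edist (g (f j)) (f j) := by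
            rw [hij]; exact edist_triangle _ _ _
        _ < r + r := ENNReal.add_lt_add (hg _) (by rw [edist_comm]; exact hg _)
        _ ≤ m := hrm
    exact (hT hi hj hne).not_gt hclose
  calc T.encard ≤ (S : Set X).encard :=
        Set.encard_le_encard_of_injOn (fun i _ => hgS (f i)) hinj
    _ = S.card := Set.encard_coe_eq_coe_finsetCard S

section NNMistake

variable {X Y : Type*} [MetricSpace X] {c : X → Y} {x : ℕ → X} {m : ℝ≥0∞}

theorem NNMistake.le_edist_of_lt (hsep : ∀ a b, c a ≠ c b → m ≤ edist a b) {t t' : ℕ}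
    (ht' : NNMistake c x t') (ht : 1 ≤ t) (htt' : t < t') : m ≤ edist (x t') (x t) := by
  obtain ⟨s, -, -, hnearest, hlabel⟩ := ht'
  calc m ≤ edist (x t') (x s) := hsep _ _ hlabel.symm
    _ ≤ edist (x t') (x t) := hnearest t ht htt'

theorem pairwise_le_edist_setOf_nnMistake (hsep : ∀ a b, c a ≠ c b → m ≤ edist a b)
    (x : ℕ → X) :
    {t : ℕ | 2 ≤ t ∧ NNMistake c x t}.Pairwise fun i j => m ≤ edist (x i) (x j) := by
  rintro i ⟨hi, hmi⟩ j ⟨hj, hmj⟩ hij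
  rcases hij.lt_or_gt with hlt | hgt
  · rw [edist_comm]
    exact hmj.le_edist_of_lt hsep (by omega) hlt
  · exact hmi.le_edist_of_lt hsep (by omega) hgt

end NNMistake

/-- If `X` is totally bounded and the classes of `c` have positive separation
`m := inf { ρ(x,x') : c x ≠ c x' } > 0`, then there is a finite number `N` — one may
take `N` so that `X` is covered by `N` open balls of radius `m/3` — such that on every
sequence the 1-nearest neighbor rule makes at most `N` mistakes in total, even under
worst-case tie-breaking; in particular it achieves sublinear regret on `c`. -/
theorem finitely_many_mistakes_of_separation {X Y : Type*} [MetricSpace X]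
    (htb : TotallyBounded (Set.univ : Set X)) (c : X → Y) (m : ℝ≥0∞)
    (hm : m = ⨅ (p : X × X) (_ : c p.1 ≠ c p.2), edist p.1 p.2) (hpos : 0 < m) :
    ∃ N : ℕ,
      (∃ S : Finset X, S.card = N ∧ (Set.univ : Set X) ⊆ ⋃ y ∈ S, EMetric.ball y (m / 3)) ∧
      ∀ x : ℕ → X, {t : ℕ | 2 ≤ t ∧ NNMistake c x t}.encard ≤ N := by
  have hsep : ∀ a b, c a ≠ c b → m ≤ edist a b := fun a b h => hm ▸ iInf₂_le (a, b) h
  obtain ⟨T, hTfin, hT⟩ :=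
    EMetric.totallyBounded_iff.mp htb (m / 3) (ENNReal.div_pos hpos.ne' (by norm_num))
  obtain ⟨S, rfl⟩ := hTfin.exists_finset_coe
  have hthirds : m / 3 + m / 3 ≤ m :=
    (ENNReal.add_thirds m).le.trans' le_self_add
  exact ⟨S.card, ⟨S, rfl, hT⟩, fun x =>
    (pairwise_le_edist_setOf_nnMistake hsep x).encard_le_card_of_cover hthirds hT⟩
end

section
/- Let (X, ρ) be a totally bounded metric space and let c : X → Y be a concept with no positive separation between classes: inf { ρ(x, x') : c(x) ≠ c(x') } = 0. Then there exists a sequence (x_t)_{t≥1} in X such that, under worst-case tie-breaking, the 1-nearest neighbor rule fails to achieve sublinear regret; in fact liminf_{T→∞} (1/T) · #{ 2 ≤ t ≤ T : the rule makes a mistake at time t } ≥ 1/2. -/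
/-!
Since points of different classes come arbitrarily close, an adversary facing any finite history
can play two points `a, b` such that some nearest neighbor of `b` among the history and `a` has the
wrong label: either `a` is a mislabeled partner of `b` closer than the whole history, or `a` and `b`
both sit much closer to one history point than the history's own separation, and that point is
mislabeled for one of them. Playing such pairs forever forces a mistake at every even time.
-/

open scoped ENNReal

open Filter Finset

section NearestNeighbor

variable {X Y : Type*} [MetricSpace X] {c : X → Y}

def NearestMislabeled (c : X → Y) (S : Finset X) (b : X) : Prop :=
  ∃ s ∈ S, c s ≠ c b ∧ ∀ p ∈ S, dist b s ≤ dist b p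

theorem Finset.exists_pos_le_dist (S : Finset X) :
    ∃ δ > 0, ∀ p ∈ S, ∀ q ∈ S, p ≠ q → δ ≤ dist p q := by
  rcases S.offDiag.eq_empty_or_nonempty with hS | hS
  · refine ⟨1, one_pos, fun p hp q hq hpq => ?_⟩
    have : (p, q) ∈ S.offDiag := mem_offDiag.2 ⟨hp, hq, hpq⟩
    simp [hS] at this
  · obtain ⟨⟨p₀, q₀⟩, hmem, hmin⟩ := S.offDiag.exists_min_image (fun pq => dist pq.1 pq.2) hS
    exact ⟨dist p₀ q₀, dist_pos.2 (mem_offDiag.1 hmem).2.2,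
      fun p hp q hq hpq => hmin (p, q) (mem_offDiag.2 ⟨hp, hq, hpq⟩)⟩

theorem nearestMislabeled_of_dist_lt_half {S : Finset X} {p w : X} {δ : ℝ} (hp : p ∈ S)
    (hsep : ∀ q ∈ S, p ≠ q → δ ≤ dist p q) (hw : dist w p < δ / 2) (hc : c p ≠ c w) :
    NearestMislabeled c S w := by
  refine ⟨p, hp, hc, fun q hq => ?_⟩
  rcases eq_or_ne p q with rfl | hpq
  · exact le_rfl
  · linarith [hsep q hq hpq, dist_triangle_left p q w]

theorem exists_dist_lt_of_iInf_edist_eq_zero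
    (hsep : (⨅ (p : X × X) (_ : c p.1 ≠ c p.2), edist p.1 p.2) = 0) {ε : ℝ} (hε : 0 < ε) :
    ∃ u v, c u ≠ c v ∧ dist u v < ε := by
  rw [← ENNReal.ofReal_pos, ← hsep, iInf_lt_iff] at hε
  obtain ⟨⟨u, v⟩, huv⟩ := hε
  obtain ⟨hc, hlt⟩ := iInf_lt_iff.1 huv
  exact ⟨u, v, hc, edist_lt_ofReal.1 hlt⟩

theorem exists_nearestMislabeled_insert [DecidableEq X]
    (hpair : ∀ ε > 0, ∃ u v, c u ≠ c v ∧ dist u v < ε) (S : Finset X) :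
    ∃ a b, NearestMislabeled c (insert a S) b := by
  obtain ⟨δ, hδ, hS⟩ := S.exists_pos_le_dist
  obtain ⟨u, v, huv, hdist⟩ := hpair (δ / 4) (by positivity)
  by_cases hfar : ∀ p ∈ S, dist v u ≤ dist v p
  · exact ⟨u, v, u, mem_insert_self u S, huv, forall_mem_insert _ _ _ |>.2 ⟨le_rfl, hfar⟩⟩
  push Not at hfar
  obtain ⟨p, hp, hvp⟩ := hfar
  have hv : dist v p < δ / 2 := by linarith [dist_comm u v]
  have hu : dist u p < δ / 2 := by linarith [dist_triangle u v p, dist_comm u v]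
  refine ⟨p, ?_⟩
  rw [insert_eq_of_mem hp]
  by_cases hcu : c p = c u
  · exact ⟨v, nearestMislabeled_of_dist_lt_half hp (hS p hp) hv (hcu ▸ huv)⟩
  · exact ⟨u, nearestMislabeled_of_dist_lt_half hp (hS p hp) hu hcu⟩

theorem nnMistake_of_nearestMislabeled [DecidableEq X] {x : ℕ → X} {t : ℕ}
    (h : NearestMislabeled c ((Ico 1 t).image x) (x t)) : NNMistake c x t := by
  obtain ⟨_, hxs, hc, hmin⟩ := h
  obtain ⟨s, hs, rfl⟩ := mem_image.1 hxs
  obtain ⟨hs1, hst⟩ := mem_Ico.1 hs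
  refine ⟨s, hs1, hst, fun s' hs'1 hs't => ?_, hc⟩
  rw [edist_dist, edist_dist]
  exact ENNReal.ofReal_le_ofReal (hmin _ (mem_image_of_mem x (mem_Ico.2 ⟨hs'1, hs't⟩)))

end NearestNeighbor

section PairSequence

variable {X : Type*} [DecidableEq X] (a b : Finset X → X)

def pairHistory : ℕ → Finset X
  | 0 => ∅
  | k + 1 => insert (b (pairHistory k)) (insert (a (pairHistory k)) (pairHistory k))

-- Round `k` is played at times `2k+1` and `2k+2`; the value at time `0` is never used.
def pairSeq (t : ℕ) : X :=
  if Odd t then a (pairHistory a b ((t - 1) / 2)) else b (pairHistory a b ((t - 1) / 2))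

theorem pairSeq_two_mul_add_one (k : ℕ) : pairSeq a b (2 * k + 1) = a (pairHistory a b k) := by
  simp [pairSeq]

theorem pairSeq_two_mul_add_two (k : ℕ) : pairSeq a b (2 * k + 2) = b (pairHistory a b k) := by
  have hk : (2 * k + 1) / 2 = k := by omega
  simp [pairSeq, hk, parity_simps]

theorem image_Ico_pairSeq_two_mul_add_one (k : ℕ) :
    (Ico 1 (2 * k + 1)).image (pairSeq a b) = pairHistory a b k := by
  induction k with
  | zero => rfl
  | succ k ih =>
    have hIco : Ico 1 (2 * (k + 1) + 1) =
        insert (2 * k + 2) (insert (2 * k + 1) (Ico 1 (2 * k + 1))) := by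
      ext t
      simp only [mem_Ico, mem_insert]
      omega
    rw [hIco, image_insert, image_insert, ih, pairSeq_two_mul_add_one, pairSeq_two_mul_add_two,
      pairHistory]

theorem image_Ico_pairSeq_two_mul_add_two (k : ℕ) :
    (Ico 1 (2 * k + 2)).image (pairSeq a b) = insert (a (pairHistory a b k)) (pairHistory a b k) := by
  have hIco : Ico 1 (2 * k + 2) = insert (2 * k + 1) (Ico 1 (2 * k + 1)) :=
    (insert_Ico_right_eq_Ico_add_one (by omega)).symm
  rw [hIco, image_insert, image_Ico_pairSeq_two_mul_add_one, pairSeq_two_mul_add_one]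

end PairSequence

section Counting

theorem div_two_le_ncard_setOf_of_forall {P : ℕ → Prop} (hP : ∀ k, P (2 * k + 2)) (T : ℕ) :
    T / 2 ≤ {t | 2 ≤ t ∧ t ≤ T ∧ P t}.ncard := by
  calc T / 2 = ((range (T / 2)).image (fun k => 2 * k + 2)).card := by
        rw [card_image_of_injective _ (fun i j h => by omega), card_range]
    _ = (((range (T / 2)).image (fun k => 2 * k + 2) : Finset ℕ) : Set ℕ).ncard :=
        (Set.ncard_coe_finset _).symm
    _ ≤ _ := Set.ncard_le_ncard (fun t ht => by
        obtain ⟨k, hk, rfl⟩ := mem_image.1 (mem_coe.1 ht)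
        exact ⟨by omega, by rw [mem_range] at hk; omega, hP k⟩)
      ((Set.finite_Icc 2 T).subset fun t ht => ⟨ht.1, ht.2.1⟩)

theorem ncard_setOf_le (P : ℕ → Prop) (T : ℕ) : {t | 2 ≤ t ∧ t ≤ T ∧ P t}.ncard ≤ T :=
  calc {t | 2 ≤ t ∧ t ≤ T ∧ P t}.ncard ≤ (Set.Icc 2 T).ncard :=
        Set.ncard_le_ncard (fun t ht => ⟨ht.1, ht.2.1⟩) (Set.finite_Icc 2 T)
    _ ≤ T := by rw [Set.ncard_eq_toFinset_card', Set.toFinset_Icc, Nat.card_Icc]; omega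

theorem half_le_liminf_div {m : ℕ → ℕ} (hlow : ∀ T, T / 2 ≤ m T) (hup : ∀ T, m T ≤ T) :
    (1 : ℝ) / 2 ≤ liminf (fun T : ℕ => (m T : ℝ) / T) atTop := by
  have hlim : Tendsto (fun T : ℕ => 1 / 2 - 1 / (T : ℝ)) atTop (nhds (1 / 2)) := by
    simpa using tendsto_one_div_atTop_nhds_zero_nat.const_sub (1 / 2 : ℝ)
  have hev : ∀ᶠ T : ℕ in atTop, 1 / 2 - 1 / (T : ℝ) ≤ m T / T := by
    filter_upwards [eventually_gt_atTop 0] with T hT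
    have hT' : (0 : ℝ) < T := by exact_mod_cast hT
    have hT2 : T ≤ 2 * m T + 1 := by have := hlow T; omega
    have hT2' : (T : ℝ) ≤ 2 * (m T : ℝ) + 1 := by exact_mod_cast hT2
    rw [le_div_iff₀ hT', sub_mul, one_div_mul_cancel hT'.ne']
    linarith
  have hbdd : IsCoboundedUnder (· ≥ ·) atTop (fun T : ℕ => (m T : ℝ) / T) :=
    isCoboundedUnder_ge_of_le atTop (x := 1) fun T => div_le_one_of_le₀ (by exact_mod_cast hup T)
      T.cast_nonneg
  calc (1 : ℝ) / 2 = liminf (fun T : ℕ => 1 / 2 - 1 / (T : ℝ)) atTop := hlim.liminf_eq.symm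
    _ ≤ _ := liminf_le_liminf hev hlim.isBoundedUnder_ge hbdd

end Counting

theorem exists_bad_sequence_of_no_separation_general {X Y : Type*} [MetricSpace X]
    (c : X → Y)
    (hsep : (⨅ (p : X × X) (_ : c p.1 ≠ c p.2), edist p.1 p.2) = 0) :
    ∃ x : ℕ → X,
      (1 : ℝ) / 2 ≤ Filter.liminf
        (fun T : ℕ => (({t : ℕ | 2 ≤ t ∧ t ≤ T ∧ NNMistake c x t}).ncard : ℝ) / T)
        Filter.atTop := by
  classical
  choose a b hab using exists_nearestMislabeled_insert fun ε hε =>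
    exists_dist_lt_of_iInf_edist_eq_zero hsep hε
  have hmistake (k : ℕ) : NNMistake c (pairSeq a b) (2 * k + 2) := by
    apply nnMistake_of_nearestMislabeled
    rw [image_Ico_pairSeq_two_mul_add_two, pairSeq_two_mul_add_two]
    exact hab _
  exact ⟨pairSeq a b, half_le_liminf_div (div_two_le_ncard_setOf_of_forall hmistake)
    (ncard_setOf_le _)⟩

/-- If `X` is totally bounded and there is no positive separation between the classes
of `c`, then there is a sequence on which the 1-nearest neighbor rule, under worst-case
tie-breaking, fails to achieve sublinear regret; in fact its asymptotic mistake rate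
has liminf at least `1/2`. -/
theorem exists_bad_sequence_of_no_separation {X Y : Type*} [MetricSpace X]
    (htb : TotallyBounded (Set.univ : Set X)) (c : X → Y)
    (hsep : (⨅ (p : X × X) (_ : c p.1 ≠ c p.2), edist p.1 p.2) = 0) :
    ∃ x : ℕ → X,
      (1 : ℝ) / 2 ≤ Filter.liminf
        (fun T : ℕ => (({t : ℕ | 2 ≤ t ∧ t ≤ T ∧ NNMistake c x t}).ncard : ℝ) / T)
        Filter.atTop :=
  exists_bad_sequence_of_no_separation_general c hsep
end

section
/- Let (X, ρ) be a length space and c : X → Y a concept. Then for every x ∈ X, the margin equals the distance to the boundary set: m_c(x) = inf { ρ(x, z) : z ∈ ∂X }, where both sides are interpreted in [0, ∞] (an infimum over the empty set being ∞). -/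
open scoped ENNReal Topology

/-- `(X, ρ)` is a length space: the distance between two points is the infimum of the
lengths (total variations) of continuous paths `γ : [0,1] → X` joining them. -/
def IsLengthSpace (X : Type*) [MetricSpace X] : Prop :=
  ∀ x x' : X, edist x x' =
    ⨅ (γ : ℝ → X) (_ : ContinuousOn γ (Set.Icc 0 1)) (_ : γ 0 = x) (_ : γ 1 = x'),
      eVariationOn γ (Set.Icc 0 1)

/-!
One inequality holds in every metric space: the margin is 1-Lipschitz, so it is at most the
distance to any point of margin zero. For the other, a path from `x` to a point of another class
has preconnected image, on which `c` cannot be locally constant everywhere; hence the path meets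
the boundary, and the length of the path dominates the distance from `x` to that boundary point.
-/

section Margin

variable {X Y : Type*} [MetricSpace X] (c : X → Y)

lemma margin_le_edist {x y : X} (h : c y ≠ c x) : margin c x ≤ edist x y :=
  iInf₂_le y h

lemma margin_le_edist_add_margin (x z : X) : margin c x ≤ edist x z + margin c z := by
  by_cases h : c z = c x
  · calc margin c x ≤ ⨅ (x' : X) (_ : c x' ≠ c z), edist x z + edist z x' :=
          le_iInf₂ fun x' hx' => (margin_le_edist c (h ▸ hx')).trans (edist_triangle _ _ _)
      _ = edist x z + margin c z := by simp only [margin, ENNReal.add_iInf]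
  · exact (margin_le_edist c h).trans le_self_add

lemma eventually_eq_of_margin_ne_zero {x : X} (hx : margin c x ≠ 0) :
    ∀ᶠ y in 𝓝 x, c y = c x := by
  filter_upwards [Metric.eball_mem_nhds x (pos_iff_ne_zero.2 hx)] with y hy
  by_contra hne
  exact (margin_le_edist c hne).not_gt (Metric.mem_eball'.1 hy)

lemma IsPreconnected.exists_margin_eq_zero {S : Set X} (hS : IsPreconnected S) {x y : X}
    (hx : x ∈ S) (hy : y ∈ S) (hxy : c x ≠ c y) : ∃ z ∈ S, margin c z = 0 := by
  by_contra! hS0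
  -- With the discrete topology on `Y`, being locally constant means being continuous.
  let _ : TopologicalSpace Y := ⊥
  have : DiscreteTopology Y := ⟨rfl⟩
  have hc : ContinuousOn c S := fun z hz => by
    have : ContinuousAt c z := by
      rw [ContinuousAt, nhds_discrete Y, Filter.tendsto_pure]
      exact eventually_eq_of_margin_ne_zero c (hS0 z hz)
    exact this.continuousWithinAt
  exact hxy (hS.constant hc hx hy)

end Margin

/-- In a length space, the margin of a point equals its distance (in `[0,∞]`) to the
boundary set `∂X = {z | m_c(z) = 0}`, the infimum over the empty set being `∞`. -/
theorem margin_eq_edist_boundary {X Y : Type*} [MetricSpace X]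
    (hX : IsLengthSpace X) (c : X → Y) :
    ∀ x : X, margin c x = ⨅ (z : X) (_ : margin c z = 0), edist x z := by
  intro x
  apply le_antisymm
  · exact le_iInf₂ fun z hz => by simpa [hz] using margin_le_edist_add_margin c x z
  · refine le_iInf₂ fun x' hx' => ?_
    rw [hX x x']
    refine le_iInf fun γ => le_iInf fun hγ => le_iInf fun hγ0 => le_iInf fun hγ1 => ?_
    have h0 : (0 : ℝ) ∈ Set.Icc 0 1 := Set.left_mem_Icc.2 zero_le_one
    have h1 : (1 : ℝ) ∈ Set.Icc 0 1 := Set.right_mem_Icc.2 zero_le_one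
    obtain ⟨_, ⟨t, ht, rfl⟩, hzt⟩ := (isPreconnected_Icc.image γ hγ).exists_margin_eq_zero c
      (Set.mem_image_of_mem γ h0) (Set.mem_image_of_mem γ h1) (by rw [hγ0, hγ1]; exact hx'.symm)
    calc ⨅ (z : X) (_ : margin c z = 0), edist x z ≤ edist x (γ t) := iInf₂_le (γ t) hzt
      _ ≤ eVariationOn γ (Set.Icc 0 1) := hγ0 ▸ eVariationOn.edist_le γ h0 ht
end

section
/- Let X be a measurable space, ν a finite measure on X, Y a countable label set, and c : X → Y a measurable concept. Let ℓ : X × Y × Y → ℝ be a measurable loss with 0 ≤ ℓ ≤ C for some constant C and ℓ(x, y, y) = 0 for all x, y. Let 𝒜 be a prediction strategy mapping each finite history ((x_1, y_1), …, (x_{t-1}, y_{t-1})) ∈ (X × Y)^{t-1} to a measurable hypothesis h_t : X → Y. Suppose 𝒜 is online locally consistent for c: there is a countable family (U_n)_{n∈ℕ} of measurable subsets of X with ν(X \ ⋃_n U_n) = 0 such that for every n and every sequence (x_t)_{t≥1} in X (with hypotheses h_t produced by 𝒜 from the history ((x_1, c(x_1)), …, (x_{t-1}, c(x_{t-1})))),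 either the set { t : x_t ∈ U_n } is finite, or for every ε > 0 there exists T such that for all t ≥ T, sup_{x ∈ U_n} ℓ(x, c(x), h_t(x)) < ε. Let (X_t)_{t≥1} be an X-valued process driven by a ν-dominated adversary, and let h_t denote the hypothesis produced by 𝒜 from the history ((X_1, c(X_1)), …, (X_{t-1}, c(X_{t-1}))). Then almost surely, (1/T) Σ_{t=1}^T ℓ(X_t, c(X_t), h_t(X_t)) → 0 as T → ∞. -/
/-!
Online local consistency makes the loss eventually smaller than any `ε` on each of the finitely
many sets `U 0, …, U M`. Their complement `B M` has small `ν`-measure for large `M`, so by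
domination it has conditional probability `≤ ε` at every step, and then the frequency of visits
of `X t` to `B M` is asymptotically `≤ ε` almost surely: the indicators minus their conditional
expectations form a bounded martingale difference sequence, whose averages tend to `0` by the
`L²` bound `E[S_T²] ≤ T` and Borel–Cantelli along the squares `T = k²`. On the rare visits the
loss is at most `C`.
-/
open scoped ENNReal
open MeasureTheory Filter

/-- The history `((x 1, c (x 1)), …, (x (t-1), c (x (t-1))))` available to an online
learner at time `t` on the stream `(x s)_{s ≥ 1}` labeled by the concept `c`. -/
def history {X Y : Type*} (c : X → Y) (x : ℕ → X) (t : ℕ) : List (X × Y) :=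
  (List.range (t - 1)).map fun i => (x (i + 1), c (x (i + 1)))

open Topology

noncomputable def cesaroAvg (a : ℕ → ℝ) (T : ℕ) : ℝ := (∑ t ∈ Finset.Icc 1 T, a t) / T

theorem cesaroAvg_nonneg {a : ℕ → ℝ} (ha : ∀ t, 0 ≤ a t) (T : ℕ) : 0 ≤ cesaroAvg a T :=
  div_nonneg (Finset.sum_nonneg fun t _ => ha t) T.cast_nonneg

theorem cesaroAvg_mul_add_const (b : ℕ → ℝ) (p q : ℝ) {T : ℕ} (hT : 1 ≤ T) :
    cesaroAvg (fun t => p * b t + q) T = p * cesaroAvg b T + q := by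
  have hT' : (T : ℝ) ≠ 0 := by positivity
  simp only [cesaroAvg, Finset.sum_add_distrib, ← Finset.mul_sum, Finset.sum_const, Nat.card_Icc,
    nsmul_eq_mul, add_tsub_cancel_right]
  field_simp

theorem eventually_cesaroAvg_le {a b : ℕ → ℝ} {p q : ℝ} (hab : ∀ᶠ t in atTop, a t ≤ p * b t + q)
    {η : ℝ} (hη : 0 < η) : ∀ᶠ T in atTop, cesaroAvg a T ≤ p * cesaroAvg b T + q + η := by
  obtain ⟨T₀, hT₀⟩ := eventually_atTop.1 hab
  set g : ℕ → ℝ := fun t => a t - (p * b t + q)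
  have hsmall : ∀ᶠ T : ℕ in atTop, (∑ t ∈ Finset.Ioc 0 T₀, g t) / T ≤ η :=
    (tendsto_const_div_atTop_nhds_zero_nat _).eventually (ge_mem_nhds hη)
  filter_upwards [hsmall, eventually_ge_atTop T₀, eventually_ge_atTop 1] with T hsmallT hT hT1
  have hsum : ∑ t ∈ Finset.Icc 1 T, g t ≤ ∑ t ∈ Finset.Ioc 0 T₀, g t := by
    have hlate : ∑ t ∈ Finset.Ioc T₀ T, g t ≤ 0 :=
      Finset.sum_nonpos fun t ht => sub_nonpos.2 (hT₀ t (Finset.mem_Ioc.1 ht).1.le)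
    rw [← zero_add 1, Finset.Icc_add_one_left_eq_Ioc,
      ← Finset.sum_Ioc_consecutive g T₀.zero_le hT]
    linarith
  have hdiff : cesaroAvg a T - cesaroAvg (fun t => p * b t + q) T
      = (∑ t ∈ Finset.Icc 1 T, g t) / T := by
    simp only [cesaroAvg, g, ← sub_div, ← Finset.sum_sub_distrib]
  rw [← cesaroAvg_mul_add_const b p q hT1]
  linarith [div_le_div_of_nonneg_right hsum (T.cast_nonneg : (0 : ℝ) ≤ T)]

theorem tendsto_cesaroAvg_zero_of_le_off_sparse {L : ℕ → ℝ} {C : ℝ} (h0 : ∀ t, 0 ≤ L t)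
    (hC : ∀ t, L t ≤ C)
    (h : ∀ ε > 0, ∃ S : Set ℕ, (∀ᶠ T in atTop, cesaroAvg (S.indicator 1) T ≤ ε) ∧
      ∀ᶠ t in atTop, t ∉ S → L t ≤ ε) :
    Tendsto (cesaroAvg L) atTop (𝓝 0) := by
  have hC0 : 0 ≤ C := (h0 0).trans (hC 0)
  refine tendsto_order.2 ⟨fun a ha => .of_forall fun T => ha.trans_le (cesaroAvg_nonneg h0 T),
    fun ε hε => ?_⟩
  set δ := ε / (2 * (C + 2))
  have hδ : 0 < δ := by positivity
  obtain ⟨S, hS, hLS⟩ := h δ hδ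
  have hL : ∀ᶠ t in atTop, L t ≤ C * S.indicator 1 t + δ := hLS.mono fun t ht => by
    by_cases hmem : t ∈ S
    · simpa [hmem] using (hC t).trans (le_add_of_nonneg_right hδ.le)
    · simpa [hmem] using ht hmem
  filter_upwards [eventually_cesaroAvg_le hL hδ, hS] with T hT hST
  calc cesaroAvg L T ≤ C * cesaroAvg (S.indicator 1) T + δ + δ := hT
    _ ≤ (C + 2) * δ := by nlinarith
    _ < ε := by
      have hC2 : 0 < C + 2 := by linarith
      simp only [δ]
      field_simp
      linarith

theorem tendsto_div_of_tendsto_sq_div {S : ℕ → ℝ} (hS : ∀ n, |S (n + 1) - S n| ≤ 1)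
    (hsq : Tendsto (fun k => S (k ^ 2) / (k ^ 2 : ℕ)) atTop (𝓝 0)) :
    Tendsto (fun n => S n / n) atTop (𝓝 0) := by
  have hlip : ∀ m n, m ≤ n → |S n - S m| ≤ n - m := by
    intro m n hmn
    have := dist_le_Ico_sum_of_dist_le (f := S) hmn (d := fun _ => 1)
      fun _ _ => by rw [dist_comm, Real.dist_eq]; exact hS _
    simpa [Real.dist_eq, abs_sub_comm, Nat.cast_sub hmn] using this
  have hsqrt : Tendsto Nat.sqrt atTop atTop :=
    tendsto_atTop_atTop.2 fun k => ⟨k ^ 2, fun n hn => Nat.le_sqrt'.2 hn⟩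
  have hbound : Tendsto (fun k => |S (k ^ 2) / (k ^ 2 : ℕ)| + 2 / (k : ℝ)) atTop (𝓝 0) := by
    simpa using hsq.abs.add (tendsto_const_div_atTop_nhds_zero_nat 2)
  refine squeeze_zero_norm' ?_ (hbound.comp hsqrt)
  filter_upwards [eventually_ge_atTop 1] with n hn
  set k := n.sqrt
  have hkn : k ^ 2 ≤ n := Nat.sqrt_le' n
  have hnk : n < (k + 1) ^ 2 := Nat.lt_succ_sqrt' n
  have hknR : ((k ^ 2 : ℕ) : ℝ) ≤ n := by exact_mod_cast hkn
  have hgap : (n : ℝ) ≤ (k ^ 2 : ℕ) + 2 * k := by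
    have : n ≤ k ^ 2 + 2 * k := by nlinarith
    exact_mod_cast this
  have hSn : |S n| ≤ |S (k ^ 2)| + 2 * k := by
    have := hlip _ _ hkn
    have := abs_sub_abs_le_abs_sub (S n) (S (k ^ 2))
    linarith
  simp only [Function.comp, Real.norm_eq_abs, abs_div, Nat.abs_cast]
  calc |S n| / n ≤ (|S (k ^ 2)| + 2 * k) / (k ^ 2 : ℕ) :=
        div_le_div₀ (by positivity) hSn (by positivity) hknR
    _ = |S (k ^ 2)| / (k ^ 2 : ℕ) + 2 / k := by
        push_cast
        field_simp

theorem integral_mul_eq_zero_of_condExp_eq_zero {Ω : Type*} {m mΩ : MeasurableSpace Ω}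
    (hm : m ≤ mΩ) {P : Measure Ω} [IsFiniteMeasure P] {f g : Ω → ℝ}
    (hf : StronglyMeasurable[m] f) (hfg : Integrable (f * g) P) (hg : Integrable g P)
    (hcond : P[g | m] =ᵐ[P] 0) :
    ∫ ω, f ω * g ω ∂P = 0 := by
  calc ∫ ω, f ω * g ω ∂P = ∫ ω, P[f * g | m] ω ∂P := (integral_condExp hm).symm
    _ = ∫ ω, f ω * P[g | m] ω ∂P :=
        integral_congr_ae (condExp_mul_of_stronglyMeasurable_left hf hfg hg)
    _ = 0 := by
        rw [integral_congr_ae (hcond.mono fun ω h => by simp [h] : _ =ᵐ[P] fun _ => (0 : ℝ))]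
        simp

structure IsBoundedMartingaleDiff {Ω : Type*} {mΩ : MeasurableSpace Ω} (P : Measure Ω)
    (ℱ : Filtration ℕ mΩ) (Y : ℕ → Ω → ℝ) : Prop where
  stronglyMeasurable : ∀ t, 1 ≤ t → StronglyMeasurable[ℱ t] (Y t)
  abs_le_one : ∀ t, 1 ≤ t → ∀ᵐ ω ∂P, |Y t ω| ≤ 1
  condExp_eq_zero : ∀ t, 1 ≤ t → P[Y t | ℱ (t - 1)] =ᵐ[P] 0

namespace IsBoundedMartingaleDiff

variable {Ω : Type*} {mΩ : MeasurableSpace Ω} {P : Measure Ω} {ℱ : Filtration ℕ mΩ}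
  {Y : ℕ → Ω → ℝ}

theorem ae_forall_abs_le_one (hY : IsBoundedMartingaleDiff P ℱ Y) :
    ∀ᵐ ω ∂P, ∀ t, 1 ≤ t → |Y t ω| ≤ 1 :=
  (ae_ball_iff (Set.to_countable (Set.Ici 1))).2 hY.abs_le_one

theorem stronglyMeasurable_sum (hY : IsBoundedMartingaleDiff P ℱ Y) (T : ℕ) :
    StronglyMeasurable[ℱ T] fun ω => ∑ t ∈ Finset.Icc 1 T, Y t ω :=
  Finset.stronglyMeasurable_fun_sum _ fun t ht =>
    (hY.stronglyMeasurable t (Finset.mem_Icc.1 ht).1).mono (ℱ.mono (Finset.mem_Icc.1 ht).2)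

theorem ae_abs_sum_le (hY : IsBoundedMartingaleDiff P ℱ Y) :
    ∀ᵐ ω ∂P, ∀ T : ℕ, |∑ t ∈ Finset.Icc 1 T, Y t ω| ≤ T := by
  filter_upwards [hY.ae_forall_abs_le_one] with ω hω T
  calc |∑ t ∈ Finset.Icc 1 T, Y t ω| ≤ ∑ t ∈ Finset.Icc 1 T, |Y t ω| :=
        Finset.abs_sum_le_sum_abs _ _
    _ ≤ ∑ t ∈ Finset.Icc 1 T, (1 : ℝ) :=
        Finset.sum_le_sum fun t ht => hω t (Finset.mem_Icc.1 ht).1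
    _ = T := by simp

theorem integrable_sum [IsFiniteMeasure P] (hY : IsBoundedMartingaleDiff P ℱ Y) (T : ℕ) :
    Integrable (fun ω => ∑ t ∈ Finset.Icc 1 T, Y t ω) P :=
  .of_bound ((hY.stronglyMeasurable_sum T).mono (ℱ.le T)).aestronglyMeasurable T
    (hY.ae_abs_sum_le.mono fun _ h => h T)

theorem integrable_sum_sq [IsFiniteMeasure P] (hY : IsBoundedMartingaleDiff P ℱ Y) (T : ℕ) :
    Integrable (fun ω => (∑ t ∈ Finset.Icc 1 T, Y t ω) ^ 2) P := by
  simpa [sq] using (hY.integrable_sum T).bdd_mul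
    ((hY.stronglyMeasurable_sum T).mono (ℱ.le T)).aestronglyMeasurable
    (hY.ae_abs_sum_le.mono fun _ h => h T)

theorem integral_sum_sq_le [IsProbabilityMeasure P] (hY : IsBoundedMartingaleDiff P ℱ Y) (T : ℕ) :
    ∫ ω, (∑ t ∈ Finset.Icc 1 T, Y t ω) ^ 2 ∂P ≤ T := by
  induction T with
  | zero => simp
  | succ T ih =>
    set S : Ω → ℝ := fun ω => ∑ t ∈ Finset.Icc 1 T, Y t ω
    set Z := Y (T + 1)
    have hZbdd : ∀ᵐ ω ∂P, ‖Z ω‖ ≤ 1 := hY.abs_le_one _ le_add_self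
    have hZ_ae : AEStronglyMeasurable Z P :=
      ((hY.stronglyMeasurable _ le_add_self).mono (ℱ.le _)).aestronglyMeasurable
    have hZint : Integrable Z P := .of_bound hZ_ae 1 hZbdd
    have hSZint : Integrable (fun ω => S ω * Z ω) P :=
      (hY.integrable_sum T).mul_bdd hZ_ae hZbdd
    have hZZint : Integrable (fun ω => Z ω ^ 2) P := by simpa [sq] using hZint.mul_bdd hZ_ae hZbdd
    have horth : ∫ ω, S ω * Z ω ∂P = 0 :=
      integral_mul_eq_zero_of_condExp_eq_zero (ℱ.le T) (hY.stronglyMeasurable_sum T) hSZint hZint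
        (by simpa using hY.condExp_eq_zero (T + 1) le_add_self)
    have hZZ : ∫ ω, Z ω ^ 2 ∂P ≤ 1 := by
      simpa using integral_mono_ae hZZint (integrable_const (1 : ℝ))
        (hZbdd.mono fun ω h => (sq_le_one_iff_abs_le_one _).2 h)
    have hexp : ∀ ω, (∑ t ∈ Finset.Icc 1 (T + 1), Y t ω) ^ 2
        = S ω ^ 2 + 2 * (S ω * Z ω) + Z ω ^ 2 := fun ω => by
      rw [Finset.sum_Icc_succ_top (by omega)]
      ring
    simp only [hexp]
    rw [integral_add (f := fun ω => S ω ^ 2 + 2 * (S ω * Z ω))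
      ((hY.integrable_sum_sq T).add (hSZint.const_mul 2)) hZZint,
      integral_add (hY.integrable_sum_sq T) (hSZint.const_mul 2), integral_const_mul, horth]
    push_cast
    linarith

theorem ae_eventually_abs_sum_sq_lt [IsProbabilityMeasure P] (hY : IsBoundedMartingaleDiff P ℱ Y)
    {δ : ℝ} (hδ : 0 < δ) :
    ∀ᵐ ω ∂P, ∀ᶠ k : ℕ in atTop,
      |∑ t ∈ Finset.Icc 1 ((k + 1) ^ 2), Y t ω| < δ * ((k + 1) ^ 2 : ℕ) := by
  set A : ℕ → Set Ω := fun k =>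
    {ω | (δ * ((k + 1) ^ 2 : ℕ)) ^ 2 ≤ (∑ t ∈ Finset.Icc 1 ((k + 1) ^ 2), Y t ω) ^ 2}
  -- Chebyshev at `n = (k + 1) ^ 2` (the shift avoids the junk bound `1 / 0 = 0` at `k = 0`).
  have hA : ∀ k : ℕ, P (A k) ≤ ENNReal.ofReal (1 / δ ^ 2 * (1 / ((k + 1 : ℕ) : ℝ) ^ 2)) := by
    intro k
    have hmarkov := mul_meas_ge_le_integral_of_nonneg (.of_forall fun ω => sq_nonneg _)
      (hY.integrable_sum_sq ((k + 1) ^ 2)) ((δ * ((k + 1) ^ 2 : ℕ)) ^ 2)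
    have hreal : P.real (A k) ≤ 1 / δ ^ 2 * (1 / ((k + 1 : ℕ) : ℝ) ^ 2) := by
      have := hmarkov.trans (hY.integral_sum_sq_le _)
      rw [← le_div_iff₀' (by positivity)] at this
      refine this.trans_eq ?_
      push_cast
      field_simp
    rwa [ENNReal.le_ofReal_iff_toReal_le (measure_ne_top _ _) (by positivity)]
  have hsummable : Summable fun k : ℕ => 1 / δ ^ 2 * (1 / ((k + 1 : ℕ) : ℝ) ^ 2) :=
    ((summable_nat_add_iff 1).2 (Real.summable_one_div_nat_pow.2 one_lt_two)).mul_left _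
  have htsum : ∑' k, P (A k) ≠ ⊤ := by
    refine ne_top_of_le_ne_top ?_ (ENNReal.tsum_le_tsum hA)
    rw [← ENNReal.ofReal_tsum_of_nonneg (fun k => by positivity) hsummable]
    exact ENNReal.ofReal_ne_top
  filter_upwards [ae_eventually_notMem htsum] with ω hω
  filter_upwards [hω] with k hk
  exact abs_lt_of_sq_lt_sq (not_le.1 hk) (by positivity)

theorem ae_tendsto_sum_sq_div [IsProbabilityMeasure P] (hY : IsBoundedMartingaleDiff P ℱ Y) :
    ∀ᵐ ω ∂P, Tendsto (fun k : ℕ => (∑ t ∈ Finset.Icc 1 (k ^ 2), Y t ω) / (k ^ 2 : ℕ))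
      atTop (𝓝 0) := by
  filter_upwards [ae_all_iff.2 fun j : ℕ =>
    hY.ae_eventually_abs_sum_sq_lt (Nat.one_div_pos_of_nat (n := j))] with ω hω
  rw [← tendsto_add_atTop_iff_nat 1]
  refine Metric.tendsto_nhds.2 fun ε hε => ?_
  obtain ⟨j, hj⟩ := exists_nat_one_div_lt hε
  filter_upwards [hω j] with k hk
  rw [Real.dist_eq, sub_zero, abs_div, Nat.abs_cast, div_lt_iff₀ (by positivity)]
  exact hk.trans (by gcongr)

theorem ae_tendsto_cesaroAvg_zero [IsProbabilityMeasure P] (hY : IsBoundedMartingaleDiff P ℱ Y) :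
    ∀ᵐ ω ∂P, Tendsto (cesaroAvg (Y · ω)) atTop (𝓝 0) := by
  filter_upwards [hY.ae_tendsto_sum_sq_div, hY.ae_forall_abs_le_one] with ω hsq hbdd
  refine tendsto_div_of_tendsto_sq_div (S := fun T => ∑ t ∈ Finset.Icc 1 T, Y t ω)
    (fun n => ?_) hsq
  simpa [Finset.sum_Icc_succ_top] using hbdd (n + 1) le_add_self

end IsBoundedMartingaleDiff

theorem isBoundedMartingaleDiff_sub_condExp {Ω : Type*} {mΩ : MeasurableSpace Ω}
    {P : Measure Ω} [IsFiniteMeasure P] {ℱ : Filtration ℕ mΩ} {W : ℕ → Ω → ℝ}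
    (hW : ∀ t, 1 ≤ t → StronglyMeasurable[ℱ t] (W t)) (hW0 : ∀ t ω, 0 ≤ W t ω)
    (hW1 : ∀ t ω, W t ω ≤ 1) :
    IsBoundedMartingaleDiff P ℱ fun t => W t - P[W t | ℱ (t - 1)] where
  stronglyMeasurable t ht :=
    (hW t ht).sub (stronglyMeasurable_condExp.mono (ℱ.mono (Nat.sub_le t 1)))
  abs_le_one t ht := by
    have h0 : 0 ≤ᵐ[P] P[W t | ℱ (t - 1)] := condExp_nonneg (.of_forall (hW0 t))
    have h1 := ae_bdd_abs_condExp_of_ae_bdd_abs (m := ℱ (t - 1)) (μ := P) (R := (1 : ℝ))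
      (.of_forall fun ω => abs_le.2 ⟨by linarith [hW0 t ω], hW1 t ω⟩)
    filter_upwards [h0, h1] with ω h0 h1
    rw [abs_le] at h1 ⊢
    simp only [Pi.sub_apply, Pi.zero_apply] at h0 ⊢
    constructor <;> linarith [hW0 t ω, hW1 t ω]
  condExp_eq_zero t ht := by
    have hint : Integrable (W t) P :=
      .of_bound ((hW t ht).mono (ℱ.le t)).aestronglyMeasurable 1 <| .of_forall fun ω => by
        rw [Real.norm_eq_abs, abs_le]
        constructor <;> linarith [hW0 t ω, hW1 t ω]
    filter_upwards [condExp_sub hint (integrable_condExp (f := W t) (m := ℱ (t - 1))) (ℱ (t - 1)),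
      condExp_condExp_of_le (f := W t) le_rfl (ℱ.le (t - 1))] with ω h1 h2
    simp [h1, h2]

theorem ae_eventually_cesaroAvg_le_of_condExp_le {Ω : Type*} {mΩ : MeasurableSpace Ω}
    {P : Measure Ω} [IsProbabilityMeasure P] {ℱ : Filtration ℕ mΩ} {W : ℕ → Ω → ℝ}
    (hW : ∀ t, 1 ≤ t → StronglyMeasurable[ℱ t] (W t)) (hW0 : ∀ t ω, 0 ≤ W t ω)
    (hW1 : ∀ t ω, W t ω ≤ 1) {ε : ℝ}
    (hcond : ∀ t, 1 ≤ t → ∀ᵐ ω ∂P, P[W t | ℱ (t - 1)] ω ≤ ε) :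
    ∀ᵐ ω ∂P, ∀ ε' > ε, ∀ᶠ T in atTop, cesaroAvg (W · ω) T ≤ ε' := by
  filter_upwards [(isBoundedMartingaleDiff_sub_condExp hW hW0 hW1).ae_tendsto_cesaroAvg_zero,
    (ae_ball_iff (Set.to_countable (Set.Ici 1))).2 hcond] with ω hY hZ ε' hε'
  have hle : ∀ᶠ t in atTop, W t ω ≤ 1 * (W t - P[W t | ℱ (t - 1)]) ω + ε :=
    (eventually_ge_atTop 1).mono fun t ht => by
      simp only [Pi.sub_apply]
      linarith [hZ t ht]
  have hη : 0 < (ε' - ε) / 2 := by linarith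
  filter_upwards [eventually_cesaroAvg_le hle hη, hY.eventually (ge_mem_nhds hη)] with T h1 h2
  linarith

theorem MeasurableSet.accumulate {X : Type*} [MeasurableSpace X] {U : ℕ → Set X}
    (hU : ∀ n, MeasurableSet (U n)) (M : ℕ) : MeasurableSet (Set.accumulate U M) := by
  rw [Set.accumulate_def]
  exact .biUnion (Set.to_countable _) fun n _ => hU n

theorem tendsto_measure_compl_accumulate {X : Type*} [MeasurableSpace X] {ν : Measure X}
    [IsFiniteMeasure ν] {U : ℕ → Set X} (hU : ∀ n, MeasurableSet (U n)) :
    Tendsto (fun M => ν (Set.accumulate U M)ᶜ) atTop (𝓝 (ν (⋃ n, U n)ᶜ)) := by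
  have h := tendsto_measure_iInter_atTop (μ := ν) (s := fun M => (Set.accumulate U M)ᶜ)
    (fun M => (MeasurableSet.accumulate hU M).compl.nullMeasurableSet)
    (fun _ _ hMN => Set.compl_subset_compl.2 (Set.monotone_accumulate hMN))
    ⟨0, measure_ne_top _ _⟩
  rwa [← Set.compl_iUnion, Set.iUnion_accumulate] at h

theorem eventually_lt_of_mem_accumulate {X : Type*} {U : ℕ → Set X} {x : ℕ → X}
    {L : ℕ → X → ℝ}
    (hOLC : ∀ n, ({t : ℕ | 1 ≤ t ∧ x t ∈ U n}).Finite ∨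
      ∀ ε : ℝ, 0 < ε → ∃ T : ℕ, ∀ t, T ≤ t → ∀ p ∈ U n, L t p < ε)
    (M : ℕ) {ε : ℝ} (hε : 0 < ε) :
    ∀ᶠ t in atTop, x t ∈ Set.accumulate U M → L t (x t) < ε := by
  have hn : ∀ n, ∀ᶠ t in atTop, x t ∈ U n → L t (x t) < ε := by
    intro n
    rcases hOLC n with hfin | hconv
    · filter_upwards [Nat.cofinite_eq_atTop ▸ hfin.eventually_cofinite_notMem,
        eventually_ge_atTop 1] with t hnot ht hmem
      exact absurd ⟨ht, hmem⟩ hnot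
    · obtain ⟨T, hT⟩ := hconv ε hε
      filter_upwards [eventually_ge_atTop T] with t ht hmem using hT t ht _ hmem
  filter_upwards [(Finset.range (M + 1)).eventually_all.2 fun n _ => hn n] with t ht hmem
  obtain ⟨n, hnM, hxn⟩ := Set.mem_accumulate.1 hmem
  exact ht n (Finset.mem_range.2 (Nat.lt_succ_of_le hnM)) hxn

theorem OLC_average_loss_to_zero_general
    {X Y Ω : Type*} [MeasurableSpace X]
    {mΩ : MeasurableSpace Ω} (P : Measure Ω) [IsProbabilityMeasure P]
    (ℱ : Filtration ℕ mΩ)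
    (ν : Measure X) [IsFiniteMeasure ν]
    (c : X → Y)
    -- the bounded measurable loss
    (ℓ : X × Y × Y → ℝ) (C : ℝ)
    (hℓ0 : ∀ q : X × Y × Y, 0 ≤ ℓ q) (hℓC : ∀ q : X × Y × Y, ℓ q ≤ C)
    -- the prediction strategy, mapping histories to measurable hypotheses
    (alg : List (X × Y) → X → Y)
    -- the strategy is online locally consistent for `c`
    (U : ℕ → Set X) (hUmeas : ∀ n, MeasurableSet (U n))
    (hUcover : ν (Set.univ \ ⋃ n, U n) = 0)
    (hOLC : ∀ (n : ℕ) (x : ℕ → X),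
      ({t : ℕ | 1 ≤ t ∧ x t ∈ U n}).Finite ∨
      ∀ ε : ℝ, 0 < ε → ∃ T : ℕ, ∀ t, T ≤ t →
        ∀ p ∈ U n, ℓ (p, c p, alg (history c x t) p) < ε)
    -- the adapted process of instances
    (Xp : ℕ → Ω → X) (hadapt : ∀ t, 1 ≤ t → Measurable[ℱ t] (Xp t))
    -- the adversary: `μa t ω` is the conditional law of `Xp t` given `ℱ (t-1)`
    (μa : ℕ → Ω → Measure X)
    (hcond : ∀ t, 1 ≤ t → ∀ A : Set X, MeasurableSet A →
      (fun ω => (μa t ω A).toReal) =ᵐ[P]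
        MeasureTheory.condExp (ℱ (t - 1)) P
          ((Xp t ⁻¹' A).indicator fun _ => (1 : ℝ)))
    -- the adversary is `ν`-dominated
    (hdom : ∀ ε : ℝ≥0∞, 0 < ε → ∃ δ : ℝ≥0∞, 0 < δ ∧
      ∀ A : Set X, MeasurableSet A → ν A < δ → ∀ t, 1 ≤ t →
        ∀ᵐ ω ∂P, μa t ω A < ε) :
    ∀ᵐ ω ∂P, Tendsto
      (fun T : ℕ =>
        (∑ t ∈ Finset.Icc 1 T,
          ℓ (Xp t ω, c (Xp t ω),
            alg (history c (fun s => Xp s ω) t) (Xp t ω))) / T)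
      atTop (nhds 0) := by
  set B : ℕ → Set X := fun M => (Set.accumulate U M)ᶜ
  have hB : ∀ M, MeasurableSet (B M) := fun M => (MeasurableSet.accumulate hUmeas M).compl
  have hνB : Tendsto (fun M => ν (B M)) atTop (𝓝 0) := by
    have h := tendsto_measure_compl_accumulate (ν := ν) hUmeas
    rwa [Set.compl_eq_univ_sdiff, hUcover] at h
  have hsmall : ∀ k : ℕ, ∃ M, ∀ t, 1 ≤ t → ∀ᵐ ω ∂P,
      P[(Xp t ⁻¹' B M).indicator fun _ => (1 : ℝ) | ℱ (t - 1)] ω ≤ 1 / (k + 1) := by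
    intro k
    obtain ⟨δ, hδ, hdomδ⟩ := hdom _ (ENNReal.ofReal_pos.2 (Nat.one_div_pos_of_nat (n := k)))
    obtain ⟨M, hM⟩ := (hνB.eventually (gt_mem_nhds hδ)).exists
    refine ⟨M, fun t ht => ?_⟩
    filter_upwards [hdomδ _ (hB M) hM t ht, hcond t ht _ (hB M)] with ω hlt heq
    exact heq ▸ (ENNReal.toReal_lt_of_lt_ofReal hlt).le
  choose M hM using hsmall
  have hfreq : ∀ k : ℕ, ∀ᵐ ω ∂P, ∀ ε' > 1 / ((k : ℝ) + 1), ∀ᶠ T in atTop,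
      cesaroAvg (fun t => (Xp t ⁻¹' B (M k)).indicator (fun _ => (1 : ℝ)) ω) T ≤ ε' := fun k =>
    ae_eventually_cesaroAvg_le_of_condExp_le
      (fun t ht => stronglyMeasurable_const.indicator (hadapt t ht (hB (M k))))
      (fun t ω => Set.indicator_nonneg (fun _ _ => zero_le_one) ω)
      (fun t ω => Set.indicator_le_self' (fun _ _ => zero_le_one) ω) (hM k)
  filter_upwards [ae_all_iff.2 hfreq] with ω hω
  refine tendsto_cesaroAvg_zero_of_le_off_sparse (fun t => hℓ0 _) (fun t => hℓC _)
    fun ε hε => ?_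
  obtain ⟨k, hk⟩ := exists_nat_one_div_lt hε
  refine ⟨{t | Xp t ω ∈ B (M k)}, hω k ε hk, ?_⟩
  filter_upwards [eventually_lt_of_mem_accumulate (fun n => hOLC n _) (M k) hε] with t ht hnot
  exact (ht (not_not.1 hnot)).le

/-- Any online locally consistent prediction strategy achieves vanishing average loss,
almost surely, against a `ν`-dominated adversary. -/
theorem OLC_average_loss_to_zero
    {X Y Ω : Type*} [MeasurableSpace X]
    [Countable Y] [MeasurableSpace Y] [MeasurableSingletonClass Y]
    {mΩ : MeasurableSpace Ω} (P : Measure Ω) [IsProbabilityMeasure P]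
    (ℱ : Filtration ℕ mΩ)
    (ν : Measure X) [IsFiniteMeasure ν]
    (c : X → Y) (hc : Measurable c)
    -- the bounded measurable loss
    (ℓ : X × Y × Y → ℝ) (hℓmeas : Measurable ℓ) (C : ℝ)
    (hℓ0 : ∀ q : X × Y × Y, 0 ≤ ℓ q) (hℓC : ∀ q : X × Y × Y, ℓ q ≤ C)
    (hℓdiag : ∀ (p : X) (y : Y), ℓ (p, y, y) = 0)
    -- the prediction strategy, mapping histories to measurable hypotheses
    (alg : List (X × Y) → X → Y) (halg : ∀ l, Measurable (alg l))
    -- the strategy is online locally consistent for `c`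
    (U : ℕ → Set X) (hUmeas : ∀ n, MeasurableSet (U n))
    (hUcover : ν (Set.univ \ ⋃ n, U n) = 0)
    (hOLC : ∀ (n : ℕ) (x : ℕ → X),
      ({t : ℕ | 1 ≤ t ∧ x t ∈ U n}).Finite ∨
      ∀ ε : ℝ, 0 < ε → ∃ T : ℕ, ∀ t, T ≤ t →
        ∀ p ∈ U n, ℓ (p, c p, alg (history c x t) p) < ε)
    -- the adapted process of instances
    (Xp : ℕ → Ω → X) (hadapt : ∀ t, 1 ≤ t → Measurable[ℱ t] (Xp t))
    -- the adversary: `μa t ω` is the conditional law of `Xp t` given `ℱ (t-1)`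
    (μa : ℕ → Ω → Measure X) (hprob : ∀ t ω, IsProbabilityMeasure (μa t ω))
    (hmeas : ∀ t, 1 ≤ t → ∀ A : Set X, MeasurableSet A →
      Measurable[ℱ (t - 1)] fun ω => μa t ω A)
    (hcond : ∀ t, 1 ≤ t → ∀ A : Set X, MeasurableSet A →
      (fun ω => (μa t ω A).toReal) =ᵐ[P]
        MeasureTheory.condExp (ℱ (t - 1)) P
          ((Xp t ⁻¹' A).indicator fun _ => (1 : ℝ)))
    -- the adversary is `ν`-dominated
    (hdom : ∀ ε : ℝ≥0∞, 0 < ε → ∃ δ : ℝ≥0∞, 0 < δ ∧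
      ∀ A : Set X, MeasurableSet A → ν A < δ → ∀ t, 1 ≤ t →
        ∀ᵐ ω ∂P, μa t ω A < ε) :
    ∀ᵐ ω ∂P, Tendsto
      (fun T : ℕ =>
        (∑ t ∈ Finset.Icc 1 T,
          ℓ (Xp t ω, c (Xp t ω),
            alg (history c (fun s => Xp s ω) t) (Xp t ω))) / T)
      atTop (nhds 0) :=
  OLC_average_loss_to_zero_general P ℱ ν c ℓ C hℓ0 hℓC alg U hUmeas hUcover hOLC Xp hadapt μa hcond
    hdom
end

section
/- Let (X, ρ) be a separable metric space with Borel σ-algebra, ν a finite Borel measure on X, Y a countable label set, and c : X → Y a Borel-measurable concept with ν(∂X) = 0. Let (X_t)_{t≥1} be an X-valued process driven by an adversary with smoothness rate ε : [0, ∞) → [0, 1], meaning that for every Borel A ⊆ X, every t ≥ 1, and P-almost every ω, μ_t(ω)(A) ≤ ε(ν(A)). Let M_T denote the number of times 2 ≤ t ≤ T at which the 1-nearest neighbor rule makes a mistake under worst-case tie-breaking (i.e. some s < t with ρ(X_t, X_s) ≤ ρ(X_t, X_{s'}) for all s' < t has c(X_s) ≠ c(X_t)). Then for every p ∈ (0,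 1), with probability at least 1 − p the following holds simultaneously for all T ≥ 1: M_T ≤ min{ T , inf_{V ⊆ X Borel} [ N_ML(V) + T · ε(ν(X \ V)) + sqrt(2 T log(2T/p)) ] }. -/
open scoped ENNReal
open MeasureTheory Filter

/-- The mutually-labeling covering number `N_ML(V)`: the minimal cardinality of a
family of mutually-labeling sets for `c` whose union contains `V`, as a value in
`[0,∞]` (`∞` if no finite such family exists). -/
noncomputable def NML {X Y : Type*} [MetricSpace X] (c : X → Y) (V : Set X) : ℝ≥0∞ :=
  ⨅ (𝒰 : Finset (Set X)) (_ : ∀ U ∈ 𝒰, MutuallyLabeling c U)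
    (_ : V ⊆ ⋃ U ∈ 𝒰, U), (𝒰.card : ℝ≥0∞)

/-!
A mutually labeling set `U` can host at most one mistake of the nearest neighbor rule: once some
`X_s ∈ U`, every later `X_t ∈ U` has a previous point closer than its margin, so all its nearest
neighbors carry its label. Hence, pathwise, `M_T ≤ |𝒰| + #{t ≤ T | X_t ∉ V}` for every finite
mutually labeling cover `𝒰` of `V`. The visits to `Vᶜ` have conditional probabilities at most
`ε(ν Vᶜ)`, so by the Azuma–Hoeffding inequality their number exceeds
`T ε(ν Vᶜ) + √(2T log(2T/p))` with probability at most `(p/2T)⁴`. For fixed `T` and `k`, the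
failure events of all `V` with `N_ML(V) ≤ k` are nested according to the value of `ε(ν Vᶜ)`, so
their union obeys the same bound, and a union bound over `k < T` and `T ≥ 1` costs
`∑_T T (p/2T)⁴ ≤ p`.
-/

open scoped NNReal
open ProbabilityTheory Real Set

theorem exp_mul_le_one_add_mul {z : ℝ} (hz : z ∈ Icc (0 : ℝ) 1) (l : ℝ) :
    exp (l * z) ≤ 1 + (exp l - 1) * z := by
  have h := convexOn_exp.2 (mem_univ 0) (mem_univ l) (sub_nonneg.2 hz.2) hz.1 (sub_add_cancel 1 z)
  simp only [smul_eq_mul, mul_zero, zero_add, exp_zero, mul_one] at h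
  rw [mul_comm]
  linarith

/-- Hoeffding's lemma for a centred Bernoulli(`q`) variable, whose moment generating function is
the left-hand side. -/
theorem exp_neg_mul_mul_one_add_le {q : ℝ} (hq : q ∈ Icc (0 : ℝ) 1) (l : ℝ) :
    exp (-(l * q)) * (1 + (exp l - 1) * q) ≤ exp (l ^ 2 / 8) := by
  obtain ⟨hq0, hq1⟩ := hq
  set μ : Measure Bool := ENNReal.ofReal (1 - q) • .dirac false + ENNReal.ofReal q • .dirac true
  have : IsProbabilityMeasure μ := ⟨by simp [μ, ← ENNReal.ofReal_add (sub_nonneg.2 hq1) hq0]⟩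
  have hint (f : Bool → ℝ) : ∫ b, f b ∂μ = (1 - q) * f false + q * f true := by
    rw [integral_add_measure ((integrable_dirac (by simp)).smul_measure ENNReal.ofReal_ne_top)
      ((integrable_dirac (by simp)).smul_measure ENNReal.ofReal_ne_top)]
    simp [hq0, sub_nonneg.2 hq1]
  have h := (hasSubgaussianMGF_of_mem_Icc (μ := μ) (X := fun b => if b then 1 else 0)
    (a := 0) (b := 1) (measurable_of_finite _).aemeasurable (ae_of_all _ fun b => by
      cases b <;> simp)).mgf_le l
  convert h using 1
  · simp only [mgf, hint, Bool.false_eq_true, ↓reduceIte, mul_zero, mul_one, zero_add, zero_sub,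
      mul_neg]
    rw [show l * (1 - q) = l + -(l * q) by ring, exp_add]
    ring
  · norm_num
    ring

theorem integral_mul_eq_of_ae_eq_condExp {Ω : Type*} {m mΩ : MeasurableSpace Ω} {P : Measure Ω}
    [IsFiniteMeasure P] (hm : m ≤ mΩ) {f g h : Ω → ℝ} (hg : StronglyMeasurable[m] g)
    (hgf : Integrable (g * f) P) (hf : Integrable f P) (hh : h =ᵐ[P] P[f | m]) :
    ∫ ω, g ω * f ω ∂P = ∫ ω, g ω * h ω ∂P := calc
  ∫ ω, g ω * f ω ∂P = ∫ ω, P[g * f | m] ω ∂P := (integral_condExp hm).symm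
  _ = ∫ ω, g ω * h ω ∂P := integral_congr_ae <| by
    filter_upwards [condExp_mul_of_stronglyMeasurable_left hg hgf hf, hh] with ω h1 h2
    rw [h1, Pi.mul_apply, h2]

section AzumaHoeffding

variable {Ω : Type*} {mΩ : MeasurableSpace Ω} {P : Measure Ω} {ℱ : Filtration ℕ mΩ}
  {Z q : ℕ → Ω → ℝ}

theorem abs_sum_Icc_sub_le (hZ : ∀ t ω, Z t ω ∈ Icc (0 : ℝ) 1) (hq : ∀ t ω, q t ω ∈ Icc (0 : ℝ) 1)
    (T : ℕ) (ω : Ω) : |∑ t ∈ Finset.Icc 1 T, (Z t ω - q t ω)| ≤ T := by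
  refine (Finset.abs_sum_le_sum_abs _ _).trans ?_
  refine (Finset.sum_le_card_nsmul _ _ 1 fun t _ => ?_).trans (by simp)
  rw [abs_sub_le_iff]
  constructor <;> linarith [(hZ t ω).1, (hZ t ω).2, (hq t ω).1, (hq t ω).2]

theorem measurable_sum_Icc_sub
    (hZm : ∀ t, 1 ≤ t → Measurable[ℱ t] (Z t)) (hqm : ∀ t, 1 ≤ t → Measurable[ℱ (t - 1)] (q t))
    (T : ℕ) : Measurable[ℱ T] fun ω => ∑ t ∈ Finset.Icc 1 T, (Z t ω - q t ω) := by
  refine Finset.measurable_sum _ fun t ht => ?_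
  obtain ⟨ht1, htT⟩ := Finset.mem_Icc.1 ht
  exact ((hZm t ht1).mono (ℱ.mono htT) le_rfl).sub
    ((hqm t ht1).mono (ℱ.mono (by omega)) le_rfl)

theorem integrable_exp_of_abs_le [IsFiniteMeasure P] {f : Ω → ℝ} (hf : Measurable f) {C : ℝ}
    (hC : ∀ ω, |f ω| ≤ C) : Integrable (fun ω => exp (f ω)) P :=
  .of_bound hf.exp.aestronglyMeasurable (exp C) (ae_of_all _ fun ω => by
    rw [Real.norm_eq_abs, abs_exp, exp_le_exp]; exact (le_abs_self _).trans (hC ω))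

theorem integral_mul_exp_mul_le [IsFiniteMeasure P] {m : MeasurableSpace Ω} (hm : m ≤ mΩ)
    {g Z q : Ω → ℝ} (hgm : Measurable[m] g) (hg : Integrable g P) (hg0 : ∀ ω, 0 ≤ g ω)
    (hZm : Measurable[mΩ] Z) (hZ : ∀ ω, Z ω ∈ Icc (0 : ℝ) 1) (hqm : Measurable[m] q)
    (hq : ∀ ω, q ω ∈ Icc (0 : ℝ) 1) (hZq : q =ᵐ[P] P[Z | m]) (l : ℝ) :
    ∫ ω, g ω * exp (l * Z ω) ∂P ≤ ∫ ω, g ω * (1 + (exp l - 1) * q ω) ∂P := by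
  have unit {x : ℝ} (hx : x ∈ Icc (0 : ℝ) 1) : ‖x‖ ≤ 1 :=
    abs_le.2 ⟨by linarith [hx.1], hx.2⟩
  have hgZ : Integrable (fun ω => g ω * Z ω) P :=
    hg.mul_bdd hZm.aestronglyMeasurable (c := 1) (ae_of_all _ fun ω => unit (hZ ω))
  have hgq : Integrable (fun ω => g ω * q ω) P :=
    hg.mul_bdd (hqm.mono hm le_rfl).aestronglyMeasurable (c := 1) (ae_of_all _ fun ω => unit (hq ω))
  have htower : ∫ ω, g ω * Z ω ∂P = ∫ ω, g ω * q ω ∂P :=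
    integral_mul_eq_of_ae_eq_condExp hm hgm.stronglyMeasurable hgZ
      (.of_bound hZm.aestronglyMeasurable 1 (ae_of_all _ fun ω => unit (hZ ω))) hZq
  calc ∫ ω, g ω * exp (l * Z ω) ∂P ≤ ∫ ω, g ω + (exp l - 1) * (g ω * Z ω) ∂P := by
        refine integral_mono_of_nonneg (ae_of_all _ fun ω => mul_nonneg (hg0 ω) (exp_pos _).le)
          (hg.add (hgZ.const_mul _)) (ae_of_all _ fun ω => ?_)
        calc g ω * exp (l * Z ω) ≤ g ω * (1 + (exp l - 1) * Z ω) :=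
              mul_le_mul_of_nonneg_left (exp_mul_le_one_add_mul (hZ ω) l) (hg0 ω)
          _ = _ := by ring
    _ = ∫ ω, g ω + (exp l - 1) * (g ω * q ω) ∂P := by
        rw [integral_add hg (hgZ.const_mul _), integral_add hg (hgq.const_mul _),
          integral_const_mul, integral_const_mul, htower]
    _ = ∫ ω, g ω * (1 + (exp l - 1) * q ω) ∂P := by congr with ω; ring

theorem integral_exp_mul_add_sub_le [IsFiniteMeasure P] {m : MeasurableSpace Ω} (hm : m ≤ mΩ)
    {S Z q : Ω → ℝ} (hSm : Measurable[m] S) {C : ℝ} (hS : ∀ ω, |S ω| ≤ C)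
    (hZm : Measurable[mΩ] Z) (hZ : ∀ ω, Z ω ∈ Icc (0 : ℝ) 1) (hqm : Measurable[m] q)
    (hq : ∀ ω, q ω ∈ Icc (0 : ℝ) 1) (hZq : q =ᵐ[P] P[Z | m]) (l : ℝ) :
    ∫ ω, exp (l * (S ω + (Z ω - q ω))) ∂P ≤ exp (l ^ 2 / 8) * ∫ ω, exp (l * S ω) ∂P := by
  set g : Ω → ℝ := fun ω => exp (l * S ω - l * q ω)
  have hgm : Measurable[m] g := ((hSm.const_mul l).sub (hqm.const_mul l)).exp
  have hg : Integrable g P :=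
    integrable_exp_of_abs_le (((hSm.const_mul l).sub (hqm.const_mul l)).mono hm le_rfl)
      (C := |l| * C + |l| * 1) fun ω => by
      refine (abs_sub _ _).trans ?_
      rw [abs_mul, abs_mul]
      gcongr
      exacts [hS ω, abs_le.2 ⟨by linarith [(hq ω).1], (hq ω).2⟩]
  have hexpS : Integrable (fun ω => exp (l * S ω)) P :=
    integrable_exp_of_abs_le ((hSm.const_mul l).mono hm le_rfl) (C := |l| * C) fun ω => by
      rw [abs_mul]; exact mul_le_mul_of_nonneg_left (hS ω) (abs_nonneg l)
  calc ∫ ω, exp (l * (S ω + (Z ω - q ω))) ∂P = ∫ ω, g ω * exp (l * Z ω) ∂P := by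
        congr with ω; rw [← exp_add]; ring_nf
    _ ≤ ∫ ω, g ω * (1 + (exp l - 1) * q ω) ∂P :=
        integral_mul_exp_mul_le hm hgm hg (fun ω => (exp_pos _).le) hZm hZ hqm hq hZq l
    _ ≤ ∫ ω, exp (l ^ 2 / 8) * exp (l * S ω) ∂P := by
        refine integral_mono_of_nonneg (ae_of_all _ fun ω => mul_nonneg (exp_pos _).le ?_)
          (hexpS.const_mul _) (ae_of_all _ fun ω => ?_)
        · nlinarith [(hq ω).1, (hq ω).2, exp_pos l]
        calc g ω * (1 + (exp l - 1) * q ω)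
            = exp (l * S ω) * (exp (-(l * q ω)) * (1 + (exp l - 1) * q ω)) := by
              simp only [g, sub_eq_add_neg, exp_add]; ring
          _ ≤ exp (l * S ω) * exp (l ^ 2 / 8) :=
              mul_le_mul_of_nonneg_left (exp_neg_mul_mul_one_add_le (hq ω) l) (exp_pos _).le
          _ = _ := mul_comm _ _
    _ = exp (l ^ 2 / 8) * ∫ ω, exp (l * S ω) ∂P := integral_const_mul _ _

theorem integral_exp_mul_sum_Icc_sub_le [IsProbabilityMeasure P]
    (hZm : ∀ t, 1 ≤ t → Measurable[ℱ t] (Z t)) (hZ : ∀ t ω, Z t ω ∈ Icc (0 : ℝ) 1)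
    (hqm : ∀ t, 1 ≤ t → Measurable[ℱ (t - 1)] (q t)) (hq : ∀ t ω, q t ω ∈ Icc (0 : ℝ) 1)
    (hZq : ∀ t, 1 ≤ t → q t =ᵐ[P] P[Z t | ℱ (t - 1)]) (l : ℝ) (T : ℕ) :
    ∫ ω, exp (l * ∑ t ∈ Finset.Icc 1 T, (Z t ω - q t ω)) ∂P ≤ exp (T * (l ^ 2 / 8)) := by
  induction T with
  | zero => simp
  | succ T ih =>
    simp_rw [Finset.sum_Icc_succ_top le_add_self]
    calc _ ≤ exp (l ^ 2 / 8) * ∫ ω, exp (l * ∑ t ∈ Finset.Icc 1 T, (Z t ω - q t ω)) ∂P :=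
          integral_exp_mul_add_sub_le (ℱ.le T) (measurable_sum_Icc_sub hZm hqm T)
            (abs_sum_Icc_sub_le hZ hq T) ((hZm _ le_add_self).mono (ℱ.le _) le_rfl) (hZ _)
            (hqm _ le_add_self) (hq _) (hZq _ le_add_self) l
      _ ≤ exp (l ^ 2 / 8) * exp (T * (l ^ 2 / 8)) := by gcongr
      _ = exp ((T + 1 : ℕ) * (l ^ 2 / 8)) := by rw [← exp_add]; push_cast; ring_nf

theorem measureReal_sum_Icc_sub_ge_le [IsProbabilityMeasure P]
    (hZm : ∀ t, 1 ≤ t → Measurable[ℱ t] (Z t)) (hZ : ∀ t ω, Z t ω ∈ Icc (0 : ℝ) 1)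
    (hqm : ∀ t, 1 ≤ t → Measurable[ℱ (t - 1)] (q t)) (hq : ∀ t ω, q t ω ∈ Icc (0 : ℝ) 1)
    (hZq : ∀ t, 1 ≤ t → q t =ᵐ[P] P[Z t | ℱ (t - 1)]) {a : ℝ} (ha : 0 ≤ a) (T : ℕ) :
    P.real {ω | a ≤ ∑ t ∈ Finset.Icc 1 T, (Z t ω - q t ω)} ≤ exp (-2 * a ^ 2 / T) := by
  set l := 4 * a / T
  have hint : Integrable (fun ω => exp (l * ∑ t ∈ Finset.Icc 1 T, (Z t ω - q t ω))) P :=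
    integrable_exp_of_abs_le
      (((measurable_sum_Icc_sub hZm hqm T).mono (ℱ.le T) le_rfl).const_mul l)
      fun ω => by
        rw [abs_mul]; exact mul_le_mul_of_nonneg_left (abs_sum_Icc_sub_le hZ hq T ω) (abs_nonneg l)
  calc _ ≤ exp (-l * a) * mgf (fun ω => ∑ t ∈ Finset.Icc 1 T, (Z t ω - q t ω)) P l :=
        measure_ge_le_exp_mul_mgf a (by positivity) hint
    _ ≤ exp (-l * a) * exp (T * (l ^ 2 / 8)) := by
        gcongr; exact integral_exp_mul_sum_Icc_sub_le hZm hZ hqm hq hZq l T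
    _ = exp (-2 * a ^ 2 / T) := by
        rw [← exp_add]
        congr 1
        rcases eq_or_ne (T : ℝ) 0 with hT | hT
        · simp [l, hT]
        · simp only [l]; field_simp; ring

end AzumaHoeffding

theorem measure_biUnion_le_of_antitone {α ι : Type*} [ConditionallyCompleteLinearOrder ι]
    [TopologicalSpace ι] [OrderTopology ι] [FirstCountableTopology ι] {m : MeasurableSpace α}
    {μ : Measure α} {C : ι → Set α} (hC : Antitone C) {Θ : Set ι} (hΘ : BddBelow Θ) {β : ℝ≥0∞}
    (hβ : ∀ θ ∈ Θ, μ (C θ) ≤ β) : μ (⋃ θ ∈ Θ, C θ) ≤ β := by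
  rcases Θ.eq_empty_or_nonempty with rfl | hne
  · simp
  by_cases hmin : sInf Θ ∈ Θ
  · refine (measure_mono (iUnion₂_subset fun θ hθ => ?_)).trans (hβ _ hmin)
    exact hC (csInf_le hΘ hθ)
  obtain ⟨u, hu, hlim, hmem⟩ := exists_seq_tendsto_sInf hne hΘ
  have hsub : ⋃ θ ∈ Θ, C θ ⊆ ⋃ n, C (u n) := iUnion₂_subset fun θ hθ => by
    have hlt : sInf Θ < θ := (csInf_le hΘ hθ).lt_of_ne fun h => hmin (h ▸ hθ)
    obtain ⟨n, hn⟩ := (hlim.eventually (gt_mem_nhds hlt)).exists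
    exact (hC hn.le).trans (subset_iUnion (fun n => C (u n)) n)
  calc μ (⋃ θ ∈ Θ, C θ) ≤ μ (⋃ n, C (u n)) := measure_mono hsub
    _ = ⨆ n, μ (C (u n)) := (hC.comp hu).measure_iUnion
    _ ≤ β := iSup_le fun n => hβ _ (hmem n)

section NearestNeighbor

variable {X Y : Type*} [MetricSpace X] {c : X → Y}

noncomputable def mistakeCount (c : X → Y) (x : ℕ → X) (T : ℕ) : ℕ :=
  {t : ℕ | 2 ≤ t ∧ t ≤ T ∧ NNMistake c x t}.ncard

theorem mistakeCount_le (c : X → Y) (x : ℕ → X) (T : ℕ) : mistakeCount c x T ≤ T := by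
  calc mistakeCount c x T ≤ (Set.Icc 1 T).ncard :=
        Set.ncard_le_ncard (fun t ht => ⟨by have := ht.1; omega, ht.2.1⟩) (Set.finite_Icc 1 T)
    _ = T := by simp [← Finset.coe_Icc, Set.ncard_coe_finset]

theorem MutuallyLabeling.not_NNMistake {U : Set X} (hU : MutuallyLabeling c U) {x : ℕ → X}
    {s t : ℕ} (hs : 1 ≤ s) (hst : s < t) (hxs : x s ∈ U) (hxt : x t ∈ U) : ¬NNMistake c x t := by
  rintro ⟨s₀, hs₀, hs₀t, hnearest, hlabel⟩
  have : margin c (x t) ≤ edist (x t) (x s₀) := iInf₂_le (x s₀) hlabel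
  exact (this.trans_lt ((hnearest s hs hst).trans_lt (hU _ hxt _ hxs))).false

open Classical in
theorem mistakeCount_le_card_add {𝒰 : Finset (Set X)} (h𝒰 : ∀ U ∈ 𝒰, MutuallyLabeling c U)
    {V : Set X} (hV : V ⊆ ⋃ U ∈ 𝒰, U) (x : ℕ → X) (T : ℕ) :
    mistakeCount c x T ≤ 𝒰.card + ({t ∈ Finset.Icc 1 T | x t ∉ V} : Finset ℕ).card := by
  set M := {t ∈ Finset.Icc 2 T | NNMistake c x t}
  have hM : mistakeCount c x T = M.card := by
    rw [mistakeCount, ← Set.ncard_coe_finset]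
    congr 1; ext t; simp [M, and_assoc]
  rw [hM, ← Finset.card_filter_add_card_filter_not (fun t => x t ∈ V)]
  gcongr
  · refine Finset.card_le_card_of_forall_subsingleton (fun t U => x t ∈ U) (fun t ht => ?_)
      fun U hU t₁ ht₁ t₂ ht₂ => ?_
    · simpa using hV (Finset.mem_filter.1 ht).2
    · simp only [Finset.mem_filter, M, Finset.mem_Icc, Set.mem_ofPred] at ht₁ ht₂
      obtain ⟨⟨⟨⟨h2₁, -⟩, hmis₁⟩, -⟩, hU₁⟩ := ht₁
      obtain ⟨⟨⟨⟨h2₂, -⟩, hmis₂⟩, -⟩, hU₂⟩ := ht₂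
      rcases lt_trichotomy t₁ t₂ with h | h | h
      · exact ((h𝒰 U hU).not_NNMistake (by omega) h hU₁ hU₂ hmis₂).elim
      · exact h
      · exact ((h𝒰 U hU).not_NNMistake (by omega) h hU₂ hU₁ hmis₁).elim
  · intro t ht
    simp only [M, Finset.mem_filter, Finset.mem_Icc] at ht ⊢
    exact ⟨by omega, ht.1.2⟩

theorem exists_finset_card_le_of_NML_le {V : Set X} {k : ℕ} (h : NML c V ≤ k) :
    ∃ 𝒰 : Finset (Set X), (∀ U ∈ 𝒰, MutuallyLabeling c U) ∧ V ⊆ ⋃ U ∈ 𝒰, U ∧ 𝒰.card ≤ k := by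
  have := h.trans_lt (by exact_mod_cast k.lt_succ_self : (k : ℝ≥0∞) < (k + 1 : ℕ))
  simp only [NML, iInf_lt_iff] at this
  obtain ⟨𝒰, h𝒰, hV, hcard⟩ := this
  exact ⟨𝒰, h𝒰, hV, Nat.lt_succ_iff.1 (by exact_mod_cast hcard)⟩

theorem le_sum_indicator_sub_of_mistakeCount_gt {V : Set X} {k : ℕ} (hk : NML c V ≤ k)
    {x : ℕ → X} {T : ℕ} {m : ℕ → ℝ≥0∞} {θ : ℝ≥0∞} (hm : ∀ t ∈ Finset.Icc 1 T, m t ≤ θ)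
    (hm_top : ∀ t, m t ≠ ⊤) {a : ℝ} (ha : 0 ≤ a)
    (h : (k : ℝ≥0∞) + T * θ + ENNReal.ofReal a < mistakeCount c x T) :
    a ≤ ∑ t ∈ Finset.Icc 1 T, (Vᶜ.indicator (fun _ => (1 : ℝ)) (x t) - (m t).toReal) := by
  classical
  obtain ⟨𝒰, h𝒰, hcov, hcard⟩ := exists_finset_card_le_of_NML_le hk
  set N := ({t ∈ Finset.Icc 1 T | x t ∉ V} : Finset ℕ).card
  have hN : ∑ t ∈ Finset.Icc 1 T, Vᶜ.indicator (fun _ => (1 : ℝ)) (x t) = N := by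
    simp only [Set.indicator_apply, Set.mem_compl_iff]
    rw [Finset.sum_boole]
  have hsum : ∑ t ∈ Finset.Icc 1 T, m t ≤ T * θ := by
    simpa using Finset.sum_le_card_nsmul _ _ _ hm
  have hreal : ENNReal.ofReal (∑ t ∈ Finset.Icc 1 T, (m t).toReal) = ∑ t ∈ Finset.Icc 1 T, m t := by
    rw [ENNReal.ofReal_sum_of_nonneg fun _ _ => ENNReal.toReal_nonneg]
    exact Finset.sum_congr rfl fun t _ => ENNReal.ofReal_toReal (hm_top t)
  have hlt : ENNReal.ofReal (∑ t ∈ Finset.Icc 1 T, (m t).toReal + a) < ENNReal.ofReal N := by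
    rw [ENNReal.ofReal_add (Finset.sum_nonneg fun _ _ => ENNReal.toReal_nonneg) ha, hreal,
      ENNReal.ofReal_natCast, ← ENNReal.add_lt_add_iff_left (ENNReal.natCast_ne_top k)]
    calc (k : ℝ≥0∞) + (∑ t ∈ Finset.Icc 1 T, m t + ENNReal.ofReal a)
        ≤ k + T * θ + ENNReal.ofReal a := by rw [← add_assoc]; gcongr
      _ < mistakeCount c x T := h
      _ ≤ k + N := by exact_mod_cast (mistakeCount_le_card_add h𝒰 hcov x T).trans (by omega)
  rw [ENNReal.ofReal_lt_ofReal_iff_of_nonneg (by positivity)] at hlt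
  rw [Finset.sum_sub_distrib, hN]
  linarith

theorem exists_natCast_eq_NML {V : Set X} (h : NML c V ≠ ⊤) : ∃ k : ℕ, NML c V = k := by
  obtain ⟨n, hn⟩ : ∃ n : ℕ∞, NML c V = n := ⟨⨅ (𝒰 : Finset (Set X))
    (_ : ∀ U ∈ 𝒰, MutuallyLabeling c U) (_ : V ⊆ ⋃ U ∈ 𝒰, U), (𝒰.card : ℕ∞), by simp [NML]⟩
  lift n to ℕ using (by simpa [hn] using h)
  exact ⟨n, by simp [hn]⟩

theorem mistakeCount_le_min_iInf [MeasurableSpace X] {x : ℕ → X} {T : ℕ} {e : Set X → ℝ≥0∞}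
    {b : ℝ≥0∞} (h : ∀ k < T, ∀ V, MeasurableSet V → NML c V ≤ k →
      ¬(k : ℝ≥0∞) + T * e V + b < mistakeCount c x T) :
    (mistakeCount c x T : ℝ≥0∞) ≤
      min (T : ℝ≥0∞) (⨅ (V : Set X) (_ : MeasurableSet V), NML c V + T * e V + b) := by
  have hT : (mistakeCount c x T : ℝ≥0∞) ≤ T := by exact_mod_cast mistakeCount_le c x T
  refine le_min hT (le_iInf₂ fun V hV => ?_)
  rcases lt_or_ge (NML c V) T with hlt | hge
  · obtain ⟨k, hk⟩ := exists_natCast_eq_NML (hlt.trans (ENNReal.natCast_lt_top T)).ne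
    rw [hk] at hlt ⊢
    exact not_lt.1 (h k (by exact_mod_cast hlt) V hV hk.le)
  · exact hT.trans (hge.trans (le_add_right le_self_add))

end NearestNeighbor

section Adversary

variable {X Ω : Type*} [MeasurableSpace X]
  {mΩ : MeasurableSpace Ω} {P : Measure Ω} {ℱ : Filtration ℕ mΩ}
  {Xp : ℕ → Ω → X} {μa : ℕ → Ω → Measure X}

variable (P ℱ Xp μa) in
structure IsAdversary : Prop where
  adapted : ∀ t, 1 ≤ t → Measurable[ℱ t] (Xp t)
  isProbabilityMeasure : ∀ t ω, IsProbabilityMeasure (μa t ω)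
  measurable_apply : ∀ t, 1 ≤ t → ∀ A : Set X, MeasurableSet A →
    Measurable[ℱ (t - 1)] fun ω => μa t ω A
  toReal_ae_eq_condExp : ∀ t, 1 ≤ t → ∀ A : Set X, MeasurableSet A →
    (fun ω => (μa t ω A).toReal) =ᵐ[P] P[(Xp t ⁻¹' A).indicator fun _ => (1 : ℝ) | ℱ (t - 1)]

theorem IsAdversary.measure_ne_top (hadv : IsAdversary P ℱ Xp μa) (t : ℕ) (ω : Ω) (A : Set X) :
    μa t ω A ≠ ⊤ := by
  have := hadv.isProbabilityMeasure t ω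
  exact MeasureTheory.measure_ne_top _ _

theorem IsAdversary.measureReal_sum_indicator_sub_ge_le [IsProbabilityMeasure P]
    (hadv : IsAdversary P ℱ Xp μa) {A : Set X} (hA : MeasurableSet A) {a : ℝ} (ha : 0 ≤ a) (T : ℕ) :
    P.real {ω | a ≤ ∑ t ∈ Finset.Icc 1 T,
      (A.indicator (fun _ => (1 : ℝ)) (Xp t ω) - (μa t ω A).toReal)} ≤ exp (-2 * a ^ 2 / T) := by
  refine measureReal_sum_Icc_sub_ge_le (fun t ht => ?_) (fun t ω => ?_)
    (fun t ht => (hadv.measurable_apply t ht A hA).ennreal_toReal) (fun t ω => ?_)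
    (fun t ht => hadv.toReal_ae_eq_condExp t ht A hA) ha T
  · exact (measurable_const.indicator hA).comp (hadv.adapted t ht)
  · by_cases h : Xp t ω ∈ A <;> simp [h]
  · have := hadv.isProbabilityMeasure t ω
    exact ⟨ENNReal.toReal_nonneg,
      ENNReal.toReal_le_of_le_ofReal zero_le_one (by simpa using prob_le_one)⟩

theorem IsAdversary.measure_mistakeCount_gt_le {Y : Type*} [MetricSpace X] {c : X → Y}
    [IsProbabilityMeasure P] (hadv : IsAdversary P ℱ Xp μa) {V : Set X}
    (hV : MeasurableSet V) {k : ℕ} (hk : NML c V ≤ k) {θ : ℝ≥0∞}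
    (hθ : ∀ t, 1 ≤ t → ∀ᵐ ω ∂P, μa t ω Vᶜ ≤ θ) {a : ℝ} (ha : 0 ≤ a) (T : ℕ) :
    P {ω | (k : ℝ≥0∞) + T * θ + ENNReal.ofReal a < mistakeCount c (fun s => Xp s ω) T} ≤
      ENNReal.ofReal (exp (-2 * a ^ 2 / T)) := by
  have hθT : ∀ᵐ ω ∂P, ∀ t ∈ Finset.Icc 1 T, μa t ω Vᶜ ≤ θ :=
    (eventually_all_finset _).2 fun t ht => hθ t (Finset.mem_Icc.1 ht).1
  calc _ ≤ P {ω | a ≤ ∑ t ∈ Finset.Icc 1 T,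
        (Vᶜ.indicator (fun _ => (1 : ℝ)) (Xp t ω) - (μa t ω Vᶜ).toReal)} := by
        refine measure_mono_ae ?_
        filter_upwards [hθT] with ω hω hbad
        exact le_sum_indicator_sub_of_mistakeCount_gt hk hω (fun t => hadv.measure_ne_top t ω _)
          ha hbad
    _ = ENNReal.ofReal (P.real _) := (ofReal_measureReal).symm
    _ ≤ _ := ENNReal.ofReal_le_ofReal (hadv.measureReal_sum_indicator_sub_ge_le hV.compl ha T)

theorem IsAdversary.measure_exists_mistakeCount_gt_le {Y : Type*} [MetricSpace X] {c : X → Y}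
    [IsProbabilityMeasure P] (hadv : IsAdversary P ℱ Xp μa) {e : Set X → ℝ≥0∞}
    (he : ∀ V, MeasurableSet V → ∀ t, 1 ≤ t → ∀ᵐ ω ∂P, μa t ω Vᶜ ≤ e V) (k T : ℕ) {a : ℝ}
    (ha : 0 ≤ a) :
    P {ω | ∃ V, MeasurableSet V ∧ NML c V ≤ k ∧
        (k : ℝ≥0∞) + T * e V + ENNReal.ofReal a < mistakeCount c (fun s => Xp s ω) T} ≤
      ENNReal.ofReal (exp (-2 * a ^ 2 / T)) := by
  set C : ℝ≥0∞ → Set Ω :=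
    fun θ => {ω | (k : ℝ≥0∞) + T * θ + ENNReal.ofReal a < mistakeCount c (fun s => Xp s ω) T}
  have hC : Antitone C := by
    intro θ₁ θ₂ hθ ω (hω : (k : ℝ≥0∞) + T * θ₂ + ENNReal.ofReal a < _)
    show (k : ℝ≥0∞) + T * θ₁ + ENNReal.ofReal a < _
    exact lt_of_le_of_lt (by gcongr) hω
  calc _ ≤ P (⋃ θ ∈ e '' {V | MeasurableSet V ∧ NML c V ≤ k}, C θ) :=
        measure_mono <| by
          rintro ω ⟨V, hV, hk, hω⟩
          exact mem_biUnion ⟨V, ⟨hV, hk⟩, rfl⟩ hω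
    _ ≤ _ := measure_biUnion_le_of_antitone hC (OrderBot.bddBelow _) <|
        forall_mem_image.2 fun V ⟨hV, hk⟩ => hadv.measure_mistakeCount_gt_le hV hk (he V hV) ha T

end Adversary

theorem tsum_natCast_mul_ofReal_div_pow_four_le {p : ℝ} (hp0 : 0 ≤ p) (hp1 : p ≤ 1) :
    ∑' T : ℕ, (T : ℝ≥0∞) * ENNReal.ofReal ((p / (2 * T)) ^ 4) ≤ ENNReal.ofReal p := by
  have hterm (T : ℕ) :
      (T : ℝ≥0∞) * ENNReal.ofReal ((p / (2 * T)) ^ 4) ≤ ENNReal.ofReal (p / 16 * (1 / T ^ 2)) := by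
    rw [← ENNReal.ofReal_natCast, ← ENNReal.ofReal_mul (Nat.cast_nonneg _)]
    refine ENNReal.ofReal_le_ofReal ?_
    rcases T.eq_zero_or_pos with rfl | hT
    · simp
    have hT1 : (1 : ℝ) ≤ T := by exact_mod_cast hT
    have hp4 : p ^ 4 ≤ p := pow_le_of_le_one hp0 hp1 (by norm_num)
    rw [div_pow, mul_pow]
    field_simp
    nlinarith [pow_le_pow_right₀ hT1 (by norm_num : 2 ≤ 3), pow_pos (by linarith : (0:ℝ) < T) 2]
  have hsum := hasSum_zeta_two.mul_left (p / 16)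
  calc _ ≤ ∑' T : ℕ, ENNReal.ofReal (p / 16 * (1 / T ^ 2)) := ENNReal.tsum_le_tsum hterm
    _ = ENNReal.ofReal (p / 16 * (π ^ 2 / 6)) := by
        rw [← ENNReal.ofReal_tsum_of_nonneg (fun _ => by positivity) hsum.summable, hsum.tsum_eq]
    _ ≤ ENNReal.ofReal p := by
        have : π ^ 2 ≤ 16 := by nlinarith [pi_lt_four, pi_pos]
        exact ENNReal.ofReal_le_ofReal (by nlinarith)

theorem exp_neg_two_mul_sqrt_sq_div {p : ℝ} (hp0 : 0 < p) (hp1 : p ≤ 1) {T : ℕ} (hT : 1 ≤ T) :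
    exp (-2 * √(2 * T * log (2 * T / p)) ^ 2 / T) = (p / (2 * T)) ^ 4 := by
  have hT1 : (1 : ℝ) ≤ T := by exact_mod_cast hT
  have hlog : 0 ≤ log (2 * T / p) := log_nonneg (by rw [le_div_iff₀ hp0]; linarith)
  rw [sq_sqrt (by positivity)]
  calc exp (-2 * (2 * T * log (2 * T / p)) / T) = exp ((4 : ℕ) * log (p / (2 * T))) := by
        rw [← inv_div (2 * (T : ℝ)) p, log_inv]
        congr 1
        push_cast
        field_simp
        ring
    _ = (p / (2 * T)) ^ 4 := by rw [exp_nat_mul, exp_log (by positivity)]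

theorem nearestNeighbor_mistake_bound_general
    {X Y Ω : Type*} [MetricSpace X]
    [MeasurableSpace X]
    {mΩ : MeasurableSpace Ω} (P : Measure Ω) [IsProbabilityMeasure P]
    (ℱ : Filtration ℕ mΩ)
    (ν : Measure X)
    (c : X → Y)
    -- the adapted process of instances
    (Xp : ℕ → Ω → X) (hadapt : ∀ t, 1 ≤ t → Measurable[ℱ t] (Xp t))
    -- the adversary: `μa t ω` is the conditional law of `Xp t` given `ℱ (t-1)`
    (μa : ℕ → Ω → Measure X) (hprob : ∀ t ω, IsProbabilityMeasure (μa t ω))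
    (hmeas : ∀ t, 1 ≤ t → ∀ A : Set X, MeasurableSet A →
      Measurable[ℱ (t - 1)] fun ω => μa t ω A)
    (hcond : ∀ t, 1 ≤ t → ∀ A : Set X, MeasurableSet A →
      (fun ω => (μa t ω A).toReal) =ᵐ[P]
        MeasureTheory.condExp (ℱ (t - 1)) P
          ((Xp t ⁻¹' A).indicator fun _ => (1 : ℝ)))
    -- the adversary has smoothness rate `eps : [0,∞) → [0,1]`
    (eps : ℝ≥0∞ → ℝ≥0∞)
    (hsmooth : ∀ A : Set X, MeasurableSet A → ∀ t, 1 ≤ t →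
      ∀ᵐ ω ∂P, μa t ω A ≤ eps (ν A)) :
    ∀ p : ℝ, 0 < p → p < 1 →
      ENNReal.ofReal (1 - p) ≤
        P {ω : Ω | ∀ T : ℕ, 1 ≤ T →
          (({t : ℕ | 2 ≤ t ∧ t ≤ T ∧ NNMistake c (fun s => Xp s ω) t}).ncard : ℝ≥0∞) ≤
            min (T : ℝ≥0∞)
              (⨅ (V : Set X) (_ : MeasurableSet V),
                NML c V + (T : ℝ≥0∞) * eps (ν (Set.univ \ V)) +
                  ENNReal.ofReal (Real.sqrt (2 * T * Real.log (2 * T / p))))} := by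
  intro p hp0 hp1
  have hadv : IsAdversary P ℱ Xp μa := ⟨hadapt, hprob, hmeas, hcond⟩
  simp_rw [← compl_eq_univ_sdiff]
  set E : ℕ → ℕ → Set Ω := fun T k => {ω | ∃ V, MeasurableSet V ∧ NML c V ≤ k ∧
    (k : ℝ≥0∞) + T * eps (ν Vᶜ) + ENNReal.ofReal √(2 * T * log (2 * T / p)) <
      mistakeCount c (fun s => Xp s ω) T}
  have hE : P (⋃ (T : ℕ) (k ∈ Finset.range T), E T k) ≤ ENNReal.ofReal p := calc
    _ ≤ ∑' T : ℕ, ∑ k ∈ Finset.range T, P (E T k) :=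
      (measure_iUnion_le _).trans (ENNReal.tsum_le_tsum fun T => measure_biUnion_finset_le _ _)
    _ ≤ ∑' T : ℕ, (T : ℝ≥0∞) * ENNReal.ofReal ((p / (2 * T)) ^ 4) := by
      refine ENNReal.tsum_le_tsum fun T => (Finset.sum_le_card_nsmul _ _
        (ENNReal.ofReal ((p / (2 * T)) ^ 4)) fun k hk => ?_).trans (by simp)
      rw [← exp_neg_two_mul_sqrt_sq_div hp0 hp1.le (Nat.one_le_of_lt (Finset.mem_range.1 hk))]
      exact hadv.measure_exists_mistakeCount_gt_le (fun V hV => hsmooth _ hV.compl) k T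
        (sqrt_nonneg _)
    _ ≤ ENNReal.ofReal p := tsum_natCast_mul_ofReal_div_pow_four_le hp0.le hp1.le
  calc ENNReal.ofReal (1 - p) ≤ P (⋃ (T : ℕ) (k ∈ Finset.range T), E T k)ᶜ := by
        rw [ENNReal.ofReal_sub _ hp0.le, ENNReal.ofReal_one, tsub_le_iff_right,
          ← measure_univ (μ := P)]
        exact (measure_univ_le_add_compl _).trans (by rw [add_comm]; gcongr)
    _ ≤ _ := by
        refine measure_mono fun ω hω T _ => mistakeCount_le_min_iInf fun k hk V hV hkV hlt => hω ?_
        simp only [mem_iUnion]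
        exact ⟨T, k, Finset.mem_range.2 hk, V, hV, hkV, hlt⟩

/-- High-probability mistake bound for the 1-nearest neighbor rule against an adversary
with smoothness rate `ε`, for a Borel concept with `ν`-null boundary: with probability
at least `1 - p`, simultaneously for all `T ≥ 1` the number `M_T` of mistakes up to time
`T` is at most `min { T , inf_V [ N_ML(V) + T·ε(ν(X \ V)) + √(2T log(2T/p)) ] }`. -/
theorem nearestNeighbor_mistake_bound
    {X Y Ω : Type*} [MetricSpace X] [TopologicalSpace.SeparableSpace X]
    [MeasurableSpace X] [BorelSpace X]
    [Countable Y] [MeasurableSpace Y] [MeasurableSingletonClass Y]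
    {mΩ : MeasurableSpace Ω} (P : Measure Ω) [IsProbabilityMeasure P]
    (ℱ : Filtration ℕ mΩ)
    (ν : Measure X) [IsFiniteMeasure ν]
    (c : X → Y) (hc : Measurable c)
    -- the boundary set is `ν`-null
    (hbd : ν {x : X | margin c x = 0} = 0)
    -- the adapted process of instances
    (Xp : ℕ → Ω → X) (hadapt : ∀ t, 1 ≤ t → Measurable[ℱ t] (Xp t))
    -- the adversary: `μa t ω` is the conditional law of `Xp t` given `ℱ (t-1)`
    (μa : ℕ → Ω → Measure X) (hprob : ∀ t ω, IsProbabilityMeasure (μa t ω))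
    (hmeas : ∀ t, 1 ≤ t → ∀ A : Set X, MeasurableSet A →
      Measurable[ℱ (t - 1)] fun ω => μa t ω A)
    (hcond : ∀ t, 1 ≤ t → ∀ A : Set X, MeasurableSet A →
      (fun ω => (μa t ω A).toReal) =ᵐ[P]
        MeasureTheory.condExp (ℱ (t - 1)) P
          ((Xp t ⁻¹' A).indicator fun _ => (1 : ℝ)))
    -- the adversary has smoothness rate `eps : [0,∞) → [0,1]`
    (eps : ℝ≥0∞ → ℝ≥0∞) (heps : ∀ v, eps v ≤ 1)
    (hsmooth : ∀ A : Set X, MeasurableSet A → ∀ t, 1 ≤ t →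
      ∀ᵐ ω ∂P, μa t ω A ≤ eps (ν A)) :
    ∀ p : ℝ, 0 < p → p < 1 →
      ENNReal.ofReal (1 - p) ≤
        P {ω : Ω | ∀ T : ℕ, 1 ≤ T →
          (({t : ℕ | 2 ≤ t ∧ t ≤ T ∧ NNMistake c (fun s => Xp s ω) t}).ncard : ℝ≥0∞) ≤
            min (T : ℝ≥0∞)
              (⨅ (V : Set X) (_ : MeasurableSet V),
                NML c V + (T : ℝ≥0∞) * eps (ν (Set.univ \ V)) +
                  ENNReal.ofReal (Real.sqrt (2 * T * Real.log (2 * T / p))))} :=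
  nearestNeighbor_mistake_bound_general P ℱ ν c Xp hadapt μa hprob hmeas hcond eps hsmooth
end
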